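/- arXiv:2212.14060 — 6 statements merged into one kernel-verified Lean document; each statement's English description precedes it below -/
import Mathlib

section
/- Let d ≥ 3 be an integer. The 3-independence number of the Hamming graph H(d,2) satisfies: α₃(H(d,2)) ≤ 2^{d−1}/(d+1) if d is odd, and α₃(H(d,2)) ≤ 2^{d−1}/d if d is even. -/
open Finset

/-- The 3-independence number of the Hamming graph `H(d,q)`: the maximum size of a set
of words of length `d` over an alphabet of size `q` any two distinct members of which
have Hamming distance at least `4`. -/
noncomputable def hammingAlpha3 (d q : ℕ) : ℕ :=
  sSup {m : ℕ | ∃ C : Finset (Fin d → Fin q),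
    (∀ x ∈ C, ∀ y ∈ C, x ≠ y → 4 ≤ hammingDist x y) ∧ C.card = m}


def diffSet {n : ℕ} (x y : Fin n → Fin 2) : Finset (Fin n) :=
  Finset.univ.filter fun i => x i ≠ y i

lemma hd_eq_card {n : ℕ} (x y : Fin n → Fin 2) : hammingDist x y = (diffSet x y).card := rfl

lemma fin2_ne_iff (a b : Fin 2) : a ≠ b ↔ b = a + 1 := by revert a b; decide

lemma diffSet_flip {n : ℕ} (c : Fin n → Fin 2) (S : Finset (Fin n)) :
    diffSet c (fun i => if i ∈ S then c i + 1 else c i) = S := by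
  ext i
  simp only [diffSet, Finset.mem_filter, Finset.mem_univ, true_and]
  by_cases h : i ∈ S
  · simp only [h, if_pos, iff_true]
    generalize c i = a; revert a; decide
  · simp [h]

lemma sphere_card (n k : ℕ) (c : Fin n → Fin 2) :
    (Finset.univ.filter fun y : Fin n → Fin 2 => hammingDist c y = k).card = n.choose k := by
  have : n.choose k = (Finset.powersetCard k (Finset.univ : Finset (Fin n))).card := by
    rw [Finset.card_powersetCard, Finset.card_univ, Fintype.card_fin]
  rw [this]
  apply Finset.card_bij' (fun y _ => diffSet c y)
    (fun S _ => fun i => if i ∈ S then c i + 1 else c i)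
  · intro y hy
    rw [Finset.mem_powersetCard]
    exact ⟨Finset.filter_subset _ _, (Finset.mem_filter.mp hy).2⟩
  · intro S hS
    rw [Finset.mem_powersetCard] at hS
    rw [Finset.mem_filter]
    exact ⟨Finset.mem_univ _, by rw [hd_eq_card, diffSet_flip]; exact hS.2⟩
  · intro y hy
    funext i
    by_cases h : i ∈ diffSet c y
    · simp only [h, if_pos]
      simp only [diffSet, Finset.mem_filter, Finset.mem_univ, true_and] at h
      exact ((fin2_ne_iff _ _).mp h).symm
    · simp only [h, if_neg, ite_false]
      simp only [diffSet, Finset.mem_filter, Finset.mem_univ, true_and, not_not] at h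
      exact h
  · intro S hS
    exact diffSet_flip c S

lemma diffSet_comm {n : ℕ} (x y : Fin n → Fin 2) : diffSet x y = diffSet y x := by
  ext i; simp [diffSet, ne_comm]

lemma diffSet_symmDiff {n : ℕ} (y c c' : Fin n → Fin 2) :
    diffSet c c' = symmDiff (diffSet y c) (diffSet y c') := by
  ext i
  simp only [diffSet, Finset.mem_symmDiff, Finset.mem_filter, Finset.mem_univ, true_and]
  generalize y i = a; generalize c i = b; generalize c' i = e
  revert a b e; decide

-- disjointness of difference sets for codewords at distance 2 from y
lemma diff_disjoint {n : ℕ} (y c c' : Fin n → Fin 2) (hc : hammingDist c y = 2)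
    (hc' : hammingDist c' y = 2) (hdist : 3 ≤ hammingDist c c') :
    Disjoint (diffSet y c) (diffSet y c') := by
  by_contra hnd
  obtain ⟨i, hiA, hiB⟩ := Finset.not_disjoint_iff.mp hnd
  set A := diffSet y c with hA
  set B := diffSet y c' with hB
  have hcardA : A.card = 2 := by rw [hA, ← diffSet_comm, ← hd_eq_card, hc]
  have hcardB : B.card = 2 := by rw [hB, ← diffSet_comm, ← hd_eq_card, hc']
  have hui : (A ∪ B).card + (A ∩ B).card = 4 := by
    rw [Finset.card_union_add_card_inter, hcardA, hcardB]
  have hint : 1 ≤ (A ∩ B).card := Finset.card_pos.mpr ⟨i, Finset.mem_inter.mpr ⟨hiA, hiB⟩⟩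
  have hsub : symmDiff A B ⊆ (A ∪ B).erase i := by
    intro j hj
    rw [Finset.mem_symmDiff] at hj
    rw [Finset.mem_erase]
    constructor
    · rintro rfl
      rcases hj with ⟨_, h⟩ | ⟨_, h⟩ <;> [exact h hiB; exact h hiA]
    · rcases hj with ⟨h, _⟩ | ⟨h, _⟩ <;> simp [h]
  have hle := Finset.card_le_card hsub
  rw [hd_eq_card, diffSet_symmDiff y c c', ← hA, ← hB] at hdist
  have h2 : ((A ∪ B).erase i).card = (A ∪ B).card - 1 :=
    Finset.card_erase_of_mem (Finset.mem_union_left _ hiA)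
  omega

lemma two_mul_choose_two (n : ℕ) : 2 * n.choose 2 = n * (n - 1) := by
  induction n with
  | zero => rfl
  | succ k ih =>
    rw [Nat.choose_succ_succ]
    cases k with
    | zero => rfl
    | succ j =>
      simp only [Nat.add_sub_cancel] at *
      rw [Nat.choose_one_right] at *
      ring_nf
      ring_nf at ih
      omega

lemma punctured_bound (n : ℕ) (hn : 1 ≤ n) (C : Finset (Fin n → Fin 2))
    (h3 : ∀ x ∈ C, ∀ y ∈ C, x ≠ y → 3 ≤ hammingDist x y) :
    C.card * (n + 1) ≤ 2 ^ n ∧ (Even n → C.card * (n + 2) ≤ 2 ^ n) := by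
  classical
  set m := C.card with hm
  have hcard_univ : (Finset.univ : Finset (Fin n → Fin 2)).card = 2 ^ n := by
    simp [Finset.card_univ]
  -- the set of words at distance exactly 1 from the code
  set A1 : Finset (Fin n → Fin 2) :=
    C.biUnion (fun c => Finset.univ.filter fun y => hammingDist c y = 1) with hA1
  have hA1card : A1.card = m * n := by
    rw [hA1, Finset.card_biUnion]
    · rw [Finset.sum_congr rfl (fun c _ => by
        rw [sphere_card n 1 c, Nat.choose_one_right])]
      rw [Finset.sum_const, smul_eq_mul]
    · intro c hc c' hc' hne
      rw [Function.onFun, Finset.disjoint_left]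
      intro y hy hy'
      simp only [Finset.mem_filter, Finset.mem_univ, true_and] at hy hy'
      have htr := hammingDist_triangle c y c'
      rw [hammingDist_comm y c'] at htr
      have := h3 c hc c' hc' hne
      omega
  have hCA1 : Disjoint C A1 := by
    rw [Finset.disjoint_left]
    intro y hy hy'
    rw [hA1, Finset.mem_biUnion] at hy'
    obtain ⟨c, hc, hcy⟩ := hy'
    simp only [Finset.mem_filter, Finset.mem_univ, true_and] at hcy
    have hne : c ≠ y := by
      rintro rfl; rw [hammingDist_self] at hcy; omega
    have := h3 c hc y hy hne
    omega
  set U := C ∪ A1 with hUdef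
  have hUcard : U.card = m * (n + 1) := by
    rw [hUdef, Finset.card_union_of_disjoint hCA1, hA1card]; ring
  have hUle : U.card ≤ 2 ^ n := by
    rw [← hcard_univ]; exact Finset.card_le_card (Finset.subset_univ _)
  have part1 : m * (n + 1) ≤ 2 ^ n := by rw [← hUcard]; exact hUle
  refine ⟨part1, fun he => ?_⟩
  have hn2 : 2 ≤ n := by
    rw [Nat.even_iff] at he; omega
  -- D2 y : codewords at distance exactly 2 from y
  set D2 : (Fin n → Fin 2) → Finset (Fin n → Fin 2) :=
    fun y => C.filter fun c => hammingDist c y = 2 with hD2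
  set f : (Fin n → Fin 2) → ℕ := fun y => 2 * (D2 y).card with hf
  -- the double count
  have hdc : ∑ y : Fin n → Fin 2, (D2 y).card = m * n.choose 2 := by
    have h1 : ∀ y : Fin n → Fin 2, (D2 y).card
        = ∑ c ∈ C, if hammingDist c y = 2 then 1 else 0 := fun y => Finset.card_filter _ _
    rw [Finset.sum_congr rfl (fun y _ => h1 y), Finset.sum_comm]
    rw [Finset.sum_congr rfl (fun c (_ : c ∈ C) => ?_), Finset.sum_const, smul_eq_mul]
    rw [← Finset.card_filter]
    exact sphere_card n 2 c
  -- generic bound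
  have hcard2 : ∀ y, ∀ c ∈ D2 y, (diffSet y c).card = 2 := by
    intro y c hc
    rw [hD2, Finset.mem_filter] at hc
    rw [diffSet_comm, ← hd_eq_card, hc.2]
  have hgen : ∀ y, f y ≤ n := by
    intro y
    have hdisj : ∀ c ∈ D2 y, ∀ c' ∈ D2 y, c ≠ c' → Disjoint (diffSet y c) (diffSet y c') := by
      intro c hc c' hc' hne
      rw [hD2, Finset.mem_filter] at hc hc'
      exact diff_disjoint y c c' hc.2 hc'.2 (h3 c hc.1 c' hc'.1 hne)
    have hbu := Finset.card_biUnion hdisj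
    have : ∑ c ∈ D2 y, (diffSet y c).card = 2 * (D2 y).card := by
      rw [Finset.sum_congr rfl (fun c hc => hcard2 y c hc), Finset.sum_const, smul_eq_mul]
      ring
    rw [this] at hbu
    have hle : ((D2 y).biUnion fun c => diffSet y c).card ≤ n := by
      have := Finset.card_le_card (Finset.subset_univ ((D2 y).biUnion fun c => diffSet y c))
      simpa using this
    show 2 * (D2 y).card ≤ n
    exact le_trans (le_of_eq hbu.symm) hle
  -- bound for words at distance one from the code
  have hone : ∀ y ∈ A1, f y ≤ n - 2 := by
    intro y hy
    rw [hA1, Finset.mem_biUnion] at hy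
    obtain ⟨c0, hc0, hc0y⟩ := hy
    simp only [Finset.mem_filter, Finset.mem_univ, true_and] at hc0y
    have hc0card : (diffSet y c0).card = 1 := by
      rw [diffSet_comm, ← hd_eq_card, hc0y]
    obtain ⟨i0, hi0⟩ := Finset.card_eq_one.mp hc0card
    have hnotin : ∀ c ∈ D2 y, i0 ∉ diffSet y c := by
      intro c hc hin
      rw [hD2, Finset.mem_filter] at hc
      have hne : c0 ≠ c := by
        rintro rfl; rw [hc.2] at hc0y; omega
      have h3' := h3 c0 hc0 c hc.1 hne
      rw [hd_eq_card, diffSet_symmDiff y c0 c, hi0] at h3'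
      have hsub : symmDiff {i0} (diffSet y c) ⊆ (diffSet y c).erase i0 := by
        intro j hj
        rw [Finset.mem_symmDiff] at hj
        rcases hj with ⟨hj1, hj2⟩ | ⟨hj1, hj2⟩
        · rw [Finset.mem_singleton] at hj1; subst hj1; exact absurd hin hj2
        · rw [Finset.mem_singleton] at hj2; exact Finset.mem_erase.mpr ⟨hj2, hj1⟩
      have hcle := Finset.card_le_card hsub
      have he1 : ((diffSet y c).erase i0).card = (diffSet y c).card - 1 :=
        Finset.card_erase_of_mem hin
      have := hcard2 y c (by rw [hD2, Finset.mem_filter]; exact hc)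
      omega
    have hdisj : ∀ c ∈ D2 y, ∀ c' ∈ D2 y, c ≠ c' → Disjoint (diffSet y c) (diffSet y c') := by
      intro c hc c' hc' hne
      rw [hD2, Finset.mem_filter] at hc hc'
      exact diff_disjoint y c c' hc.2 hc'.2 (h3 c hc.1 c' hc'.1 hne)
    have hbu := Finset.card_biUnion hdisj
    have hsum2 : ∑ c ∈ D2 y, (diffSet y c).card = 2 * (D2 y).card := by
      rw [Finset.sum_congr rfl (fun c hc => hcard2 y c hc), Finset.sum_const, smul_eq_mul]
      ring
    rw [hsum2] at hbu
    have hsubU : ((D2 y).biUnion fun c => diffSet y c) ⊆ Finset.univ.erase i0 := by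
      intro j hj
      rw [Finset.mem_biUnion] at hj
      obtain ⟨c, hc, hjc⟩ := hj
      refine Finset.mem_erase.mpr ⟨?_, Finset.mem_univ _⟩
      rintro rfl; exact hnotin c hc hjc
    have hle := Finset.card_le_card hsubU
    rw [Finset.card_erase_of_mem (Finset.mem_univ _), Finset.card_univ, Fintype.card_fin] at hle
    have hpar : n % 2 = 0 := Nat.even_iff.mp he
    have h2d : 2 * (D2 y).card ≤ n - 1 := le_trans (le_of_eq hbu.symm) hle
    show 2 * (D2 y).card ≤ n - 2
    omega
  have hzero : ∀ y ∈ C, f y = 0 := by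
    intro y hy
    show 2 * (D2 y).card = 0
    have : D2 y = ∅ := by
      rw [Finset.eq_empty_iff_forall_notMem]
      intro c hc
      rw [hD2, Finset.mem_filter] at hc
      have hne : c ≠ y := by
        rintro rfl; rw [hammingDist_self] at hc; omega
      have := h3 c hc.1 y hy hne
      omega
    rw [this]
    simp
  -- assemble the sums
  have hUuniv : U ⊆ Finset.univ := Finset.subset_univ _
  have hsplit : ∑ y ∈ Finset.univ \ U, f y + ∑ y ∈ U, f y = ∑ y : Fin n → Fin 2, f y :=
    Finset.sum_sdiff hUuniv
  have hsumU : ∑ y ∈ U, f y ≤ m * n * (n - 2) := by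
    rw [hUdef, Finset.sum_union hCA1]
    have h0 : ∑ y ∈ C, f y = 0 := Finset.sum_eq_zero hzero
    have h1 : ∑ y ∈ A1, f y ≤ A1.card * (n - 2) := by
      have := Finset.sum_le_card_nsmul A1 f (n - 2) hone
      simpa [smul_eq_mul] using this
    rw [hA1card] at h1
    have h2 : m * n * (n - 2) = m * n * (n - 2) := rfl
    omega
  set t := 2 ^ n - m * (n + 1) with ht
  have ht2 : t + m * (n + 1) = 2 ^ n := by omega
  have hsdcard : (Finset.univ \ U).card = t := by
    rw [Finset.card_sdiff_of_subset hUuniv, hcard_univ, hUcard]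
  have hsumV : ∑ y ∈ Finset.univ \ U, f y ≤ t * n := by
    have := Finset.sum_le_card_nsmul (Finset.univ \ U) f n (fun y _ => hgen y)
    rw [hsdcard] at this
    simpa [smul_eq_mul] using this
  have htot : ∑ y : Fin n → Fin 2, f y = m * (n * (n - 1)) := by
    have hb : ∑ y : Fin n → Fin 2, f y = 2 * ∑ y : Fin n → Fin 2, (D2 y).card := by
      rw [Finset.mul_sum]
    rw [hb, hdc, show 2 * (m * n.choose 2) = m * (2 * n.choose 2) by ring, two_mul_choose_two]
  have key0 : m * (n * (n - 1)) ≤ m * n * (n - 2) + t * n := by omega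
  obtain ⟨k, rfl⟩ : ∃ k, n = k + 2 := ⟨n - 2, by omega⟩
  have e1 : k + 2 - 1 = k + 1 := by omega
  have e2 : k + 2 - 2 = k := by omega
  rw [e1, e2] at key0
  have hexp : m * ((k + 2) * (k + 1)) = m * (k + 2) * k + m * (k + 2) := by ring
  have hmt : m * (k + 2) ≤ t * (k + 2) := by omega
  have hmt2 : m ≤ t := Nat.le_of_mul_le_mul_right hmt (by omega)
  have hg : m * (k + 2 + 2) = m * (k + 2 + 1) + m := by ring
  omega

lemma hd_puncture {n : ℕ} (x y : Fin (n + 1) → Fin 2) :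
    hammingDist x y ≤ hammingDist (x ∘ Fin.castSucc) (y ∘ Fin.castSucc) + 1 := by
  have h1 : hammingDist x y = ∑ i : Fin (n + 1), if x i ≠ y i then 1 else 0 :=
    Finset.card_filter _ _
  have h2 : hammingDist (x ∘ Fin.castSucc) (y ∘ Fin.castSucc)
      = ∑ i : Fin n, if x (Fin.castSucc i) ≠ y (Fin.castSucc i) then 1 else 0 :=
    Finset.card_filter _ _
  rw [h1, h2, Fin.sum_univ_castSucc]
  have : (if x (Fin.last n) ≠ y (Fin.last n) then 1 else 0) ≤ 1 := by split <;> omega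
  omega

/-- **Corollary (bound for the hypercube `H(d,2)`).**  For `d ≥ 3`,
`α₃(H(d,2)) ≤ 2^(d-1)/(d+1)` if `d` is odd, and `α₃(H(d,2)) ≤ 2^(d-1)/d` if `d` is even. -/
theorem hamming_alpha3_bound_q2 (d : ℕ) (hd : 3 ≤ d) :
    (Odd d → (hammingAlpha3 d 2 : ℝ) ≤ (2 : ℝ) ^ (d - 1) / ((d : ℝ) + 1)) ∧
    (Even d → (hammingAlpha3 d 2 : ℝ) ≤ (2 : ℝ) ^ (d - 1) / (d : ℝ)) := by
  obtain ⟨n, rfl⟩ : ∃ n, d = n + 1 := ⟨d - 1, by omega⟩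
  have hn : 1 ≤ n := by omega
  set S : Set ℕ := {m : ℕ | ∃ C : Finset (Fin (n + 1) → Fin 2),
    (∀ x ∈ C, ∀ y ∈ C, x ≠ y → 4 ≤ hammingDist x y) ∧ C.card = m} with hS
  have hSne : S.Nonempty := ⟨0, ∅, by simp, by simp⟩
  -- every element of S satisfies the punctured bounds
  have hbound : ∀ m ∈ S, m * (n + 1) ≤ 2 ^ n ∧ (Even n → m * (n + 2) ≤ 2 ^ n) := by
    rintro m ⟨C, h4, rfl⟩
    set π : (Fin (n + 1) → Fin 2) → (Fin n → Fin 2) := fun x => x ∘ Fin.castSucc with hπ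
    have hinj : Set.InjOn π C := by
      intro x hx y hy hxy
      by_contra hne
      have := h4 x hx y hy hne
      have h2 := hd_puncture x y
      rw [show x ∘ Fin.castSucc = π x from rfl, show y ∘ Fin.castSucc = π y from rfl, hxy] at h2
      rw [hammingDist_self] at h2
      omega
    set C' := C.image π with hC'
    have hcard : C'.card = C.card := Finset.card_image_of_injOn hinj
    have h3 : ∀ a ∈ C', ∀ b ∈ C', a ≠ b → 3 ≤ hammingDist a b := by
      intro a ha b hb hab
      rw [hC', Finset.mem_image] at ha hb
      obtain ⟨x, hx, rfl⟩ := ha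
      obtain ⟨y, hy, rfl⟩ := hb
      have hxy : x ≠ y := by rintro rfl; exact hab rfl
      have h1 := h4 x hx y hy hxy
      have h2 := hd_puncture x y
      have hb : hammingDist (π x) (π y) = hammingDist (x ∘ Fin.castSucc) (y ∘ Fin.castSucc) := rfl
      omega
    have := punctured_bound n hn C' h3
    rw [hcard] at this
    exact this
  constructor
  · intro hodd
    have heven : Even n := by
      rcases Nat.even_or_odd n with h | h
      · exact h
      · exfalso; rw [Nat.odd_iff] at h hodd; omega
    have hub : ∀ m ∈ S, m ≤ 2 ^ n / (n + 2) := by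
      intro m hm
      rw [Nat.le_div_iff_mul_le (by omega)]
      exact (hbound m hm).2 heven
    have hsup : hammingAlpha3 (n + 1) 2 ≤ 2 ^ n / (n + 2) := csSup_le hSne hub
    have hcast : ((2 ^ n / (n + 2) : ℕ) : ℝ) ≤ (2 : ℝ) ^ n / ((n : ℝ) + 2) := by
      have := Nat.cast_div_le (α := ℝ) (m := 2 ^ n) (n := n + 2)
      push_cast at this ⊢
      convert this using 2
    calc (hammingAlpha3 (n + 1) 2 : ℝ) ≤ ((2 ^ n / (n + 2) : ℕ) : ℝ) := by
          exact_mod_cast hsup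
      _ ≤ (2 : ℝ) ^ n / ((n : ℝ) + 2) := hcast
      _ = (2 : ℝ) ^ (n + 1 - 1) / (((n : ℕ) + 1 : ℕ) + 1 : ℝ) := by
          push_cast; ring_nf
  · intro heven'
    have hub : ∀ m ∈ S, m ≤ 2 ^ n / (n + 1) := by
      intro m hm
      rw [Nat.le_div_iff_mul_le (by omega)]
      exact (hbound m hm).1
    have hsup : hammingAlpha3 (n + 1) 2 ≤ 2 ^ n / (n + 1) := csSup_le hSne hub
    have hcast : ((2 ^ n / (n + 1) : ℕ) : ℝ) ≤ (2 : ℝ) ^ n / ((n : ℝ) + 1) := by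
      have := Nat.cast_div_le (α := ℝ) (m := 2 ^ n) (n := n + 1)
      push_cast at this ⊢
      convert this using 2
    calc (hammingAlpha3 (n + 1) 2 : ℝ) ≤ ((2 ^ n / (n + 1) : ℕ) : ℝ) := by
          exact_mod_cast hsup
      _ ≤ (2 : ℝ) ^ n / ((n : ℝ) + 1) := hcast
      _ = (2 : ℝ) ^ (n + 1 - 1) / ((((n : ℕ) + 1 : ℕ) : ℝ)) := by
          push_cast; ring_nf
end

section
/- Let d₁ ≤ d₂ be positive integers. If there exists a 3-independent set of size ℓ₁ in the Hamming graph H(d₁,2) and a 3-independent set of size ℓ₂ in H(d₂,2), then there exists a 3-independent set of size d₁·ℓ₁·ℓ₂ in H(d₁+d₂,2); in particular α₃(H(d₁+d₂,2)) ≥ d₁·α₃(H(d₁,2))·α₃(H(d₂,2)). -/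
def eVec {n : ℕ} (i : Fin n) : Fin n → Fin 2 := fun k => if k = i then 1 else 0

lemma hd_add_right {n : ℕ} (a b u : Fin n → Fin 2) :
    hammingDist (a + u) (b + u) = hammingDist a b := by
  unfold hammingDist
  congr 1
  ext k
  simp [add_left_inj]

lemma hd_eVec {n : ℕ} {i j : Fin n} (h : i ≠ j) : hammingDist (eVec i) (eVec j) = 2 := by
  unfold hammingDist
  have hset : (Finset.univ.filter (fun k => eVec i k ≠ eVec j k)) = {i, j} := by
    ext k
    simp only [Finset.mem_filter, Finset.mem_univ, true_and, Finset.mem_insert,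
      Finset.mem_singleton]
    simp only [eVec]
    rcases eq_or_ne k i with rfl | hki <;> rcases eq_or_ne k j with rfl | hkj <;>
      simp_all
  rw [hset, Finset.card_insert_of_notMem (by simpa using h), Finset.card_singleton]

lemma hd_ge_two {n : ℕ} {a b : Fin n → Fin 2} {i j : Fin n} (hij : i ≠ j)
    (hab : a = b ∨ 4 ≤ hammingDist a b) :
    2 ≤ hammingDist (a + eVec i) (b + eVec j) := by
  rcases hab with rfl | h
  · have : hammingDist (a + eVec i) (a + eVec j) = 2 := by
      calc hammingDist (a + eVec i) (a + eVec j)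
          = hammingDist (eVec i + a) (eVec j + a) := by rw [add_comm a, add_comm a]
        _ = hammingDist (eVec i) (eVec j) := hd_add_right _ _ _
        _ = 2 := hd_eVec hij
    omega
  · have tri : hammingDist (a + eVec i) (b + eVec i) ≤
        hammingDist (a + eVec i) (b + eVec j) + hammingDist (b + eVec j) (b + eVec i) :=
      hammingDist_triangle _ _ _
    have h1 : hammingDist (a + eVec i) (b + eVec i) = hammingDist a b := hd_add_right _ _ _
    have h2 : hammingDist (b + eVec j) (b + eVec i) = 2 := by
      calc hammingDist (b + eVec j) (b + eVec i)
          = hammingDist (eVec j + b) (eVec i + b) := by rw [add_comm b, add_comm b]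
        _ = hammingDist (eVec j) (eVec i) := hd_add_right _ _ _
        _ = 2 := hd_eVec (Ne.symm hij)
    omega

lemma hd_append {m n : ℕ} (a a' : Fin m → Fin 2) (b b' : Fin n → Fin 2) :
    hammingDist (Fin.append a b) (Fin.append a' b') = hammingDist a a' + hammingDist b b' := by
  simp only [hammingDist, Finset.card_filter]
  rw [Fin.sum_univ_add]
  simp [Fin.append_left, Fin.append_right]

lemma hammingAlpha3_bdd (d q : ℕ) :
    BddAbove {m : ℕ | ∃ C : Finset (Fin d → Fin q),
      (∀ x ∈ C, ∀ y ∈ C, x ≠ y → 4 ≤ hammingDist x y) ∧ C.card = m} := by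
  refine ⟨Fintype.card (Fin d → Fin q), ?_⟩
  rintro m ⟨C, -, rfl⟩
  exact Finset.card_le_univ C

lemma hammingAlpha3_mem (d q : ℕ) :
    ∃ C : Finset (Fin d → Fin q),
      (∀ x ∈ C, ∀ y ∈ C, x ≠ y → 4 ≤ hammingDist x y) ∧ C.card = hammingAlpha3 d q := by
  have hne : ({m : ℕ | ∃ C : Finset (Fin d → Fin q),
      (∀ x ∈ C, ∀ y ∈ C, x ≠ y → 4 ≤ hammingDist x y) ∧ C.card = m}).Nonempty :=
    ⟨0, ∅, by simp, by simp⟩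
  exact Nat.sSup_mem hne (hammingAlpha3_bdd d q)

/-- **Proposition (product construction).**
Let `d₁ ≤ d₂` be positive integers.  If there is a 3-independent set of size `ℓ₁` in
`H(d₁,2)` and a 3-independent set of size `ℓ₂` in `H(d₂,2)`, then there is a
3-independent set of size `d₁ * ℓ₁ * ℓ₂` in `H(d₁+d₂,2)`; in particular
`α₃(H(d₁+d₂,2)) ≥ d₁ * α₃(H(d₁,2)) * α₃(H(d₂,2))`. -/
theorem hamming_alpha3_product (d₁ d₂ : ℕ) (hd₁ : 1 ≤ d₁) (hle : d₁ ≤ d₂) :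
    (∀ ℓ₁ ℓ₂ : ℕ,
      (∃ C₁ : Finset (Fin d₁ → Fin 2),
        (∀ x ∈ C₁, ∀ y ∈ C₁, x ≠ y → 4 ≤ hammingDist x y) ∧ C₁.card = ℓ₁) →
      (∃ C₂ : Finset (Fin d₂ → Fin 2),
        (∀ x ∈ C₂, ∀ y ∈ C₂, x ≠ y → 4 ≤ hammingDist x y) ∧ C₂.card = ℓ₂) →
      ∃ C : Finset (Fin (d₁ + d₂) → Fin 2),
        (∀ x ∈ C, ∀ y ∈ C, x ≠ y → 4 ≤ hammingDist x y) ∧ C.card = d₁ * ℓ₁ * ℓ₂) ∧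
    d₁ * hammingAlpha3 d₁ 2 * hammingAlpha3 d₂ 2 ≤ hammingAlpha3 (d₁ + d₂) 2 := by
  have part1 : ∀ ℓ₁ ℓ₂ : ℕ,
      (∃ C₁ : Finset (Fin d₁ → Fin 2),
        (∀ x ∈ C₁, ∀ y ∈ C₁, x ≠ y → 4 ≤ hammingDist x y) ∧ C₁.card = ℓ₁) →
      (∃ C₂ : Finset (Fin d₂ → Fin 2),
        (∀ x ∈ C₂, ∀ y ∈ C₂, x ≠ y → 4 ≤ hammingDist x y) ∧ C₂.card = ℓ₂) →
      ∃ C : Finset (Fin (d₁ + d₂) → Fin 2),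
        (∀ x ∈ C, ∀ y ∈ C, x ≠ y → 4 ≤ hammingDist x y) ∧ C.card = d₁ * ℓ₁ * ℓ₂ := by
    rintro ℓ₁ ℓ₂ ⟨C₁, h₁, hc₁⟩ ⟨C₂, h₂, hc₂⟩
    set f : Fin d₁ × (Fin d₁ → Fin 2) × (Fin d₂ → Fin 2) → (Fin (d₁ + d₂) → Fin 2) :=
      fun t => Fin.append (t.2.1 + eVec t.1) (t.2.2 + eVec (Fin.castLE hle t.1)) with hf
    set T : Finset (Fin d₁ × (Fin d₁ → Fin 2) × (Fin d₂ → Fin 2)) :=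
      Finset.univ ×ˢ C₁ ×ˢ C₂ with hT
    have key : ∀ t ∈ T, ∀ t' ∈ T, t ≠ t' → 4 ≤ hammingDist (f t) (f t') := by
      rintro ⟨i, c₁, c₂⟩ ht ⟨j, c₁', c₂'⟩ ht' hne
      simp only [hT, Finset.mem_product, Finset.mem_univ, true_and] at ht ht'
      simp only [hf]
      rw [hd_append]
      rcases eq_or_ne i j with rfl | hij
      · rw [hd_add_right, hd_add_right]
        have : c₁ ≠ c₁' ∨ c₂ ≠ c₂' := by
          by_contra hc
          push_neg at hc
          exact hne (by simp [hc.1, hc.2])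
        rcases this with hc | hc
        · have := h₁ c₁ ht.1 c₁' ht'.1 hc
          omega
        · have := h₂ c₂ ht.2 c₂' ht'.2 hc
          omega
      · have hij' : Fin.castLE hle i ≠ Fin.castLE hle j :=
          fun h => hij (Fin.castLE_injective hle h)
        have t1 : 2 ≤ hammingDist (c₁ + eVec i) (c₁' + eVec j) := by
          refine hd_ge_two hij ?_
          rcases eq_or_ne c₁ c₁' with h | h
          · exact Or.inl h
          · exact Or.inr (h₁ c₁ ht.1 c₁' ht'.1 h)
        have t2 : 2 ≤ hammingDist (c₂ + eVec (Fin.castLE hle i))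
            (c₂' + eVec (Fin.castLE hle j)) := by
          refine hd_ge_two hij' ?_
          rcases eq_or_ne c₂ c₂' with h | h
          · exact Or.inl h
          · exact Or.inr (h₂ c₂ ht.2 c₂' ht'.2 h)
        omega
    refine ⟨T.image f, ?_, ?_⟩
    · rintro x hx y hy hxy
      obtain ⟨t, ht, rfl⟩ := Finset.mem_image.mp hx
      obtain ⟨t', ht', rfl⟩ := Finset.mem_image.mp hy
      exact key t ht t' ht' (fun h => hxy (by rw [h]))
    · rw [Finset.card_image_of_injOn, hT]
      · simp only [Finset.card_product, Finset.card_univ, Fintype.card_fin, hc₁, hc₂]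
        ring
      · intro t ht t' ht' hft
        by_contra hne
        have := key t ht t' ht' hne
        rw [hft] at this
        simp at this
  refine ⟨part1, ?_⟩
  obtain ⟨C₁, h₁, hc₁⟩ := hammingAlpha3_mem d₁ 2
  obtain ⟨C₂, h₂, hc₂⟩ := hammingAlpha3_mem d₂ 2
  obtain ⟨C, hC, hCc⟩ := part1 _ _ ⟨C₁, h₁, hc₁⟩ ⟨C₂, h₂, hc₂⟩
  exact le_csSup (hammingAlpha3_bdd (d₁ + d₂) 2) ⟨C, hC, hCc⟩
end

section
/- Let d ≥ 1 be an integer and suppose α₃(H(d,2)) = ℓ. Then α₃(H(2d,2)) ≥ d·ℓ², with equality whenever d = 2^r for some positive integer r. -/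
open Finset

/-! ### General reindexing lemmas for the Hamming distance -/

lemma hammingDist_comp_equiv {γ α β : Type*} [Fintype α] [Fintype β] [DecidableEq γ]
    (e : α ≃ β) (x y : β → γ) : hammingDist (x ∘ e) (y ∘ e) = hammingDist x y := by
  simp only [hammingDist]
  apply Finset.card_bij (fun a _ => e a)
  · intro a ha; simpa using by simpa using ha
  · intro a _ b _ h; exact e.injective h
  · intro b hb; exact ⟨e.symm b, by simpa using by simpa using hb, by simp⟩

lemma hammingDist_sumElim {γ α β : Type*} [Fintype α] [Fintype β] [DecidableEq γ]
    (x x' : α → γ) (y y' : β → γ) :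
    hammingDist (Sum.elim x y) (Sum.elim x' y') = hammingDist x x' + hammingDist y y' := by
  simp only [hammingDist]
  rw [← Finset.univ_disjSum_univ]
  have : (Finset.filter (fun i => Sum.elim x y i ≠ Sum.elim x' y' i)
      ((univ : Finset α).disjSum (univ : Finset β)))
      = (univ.filter fun i => x i ≠ x' i).disjSum (univ.filter fun i => y i ≠ y' i) := by
    ext i; cases i <;> simp
  rw [this, Finset.card_disjSum]

namespace HA3

/-! ### Basic API for `hammingAlpha3` -/

def alphaSet (d q : ℕ) : Set ℕ :=
  {m : ℕ | ∃ C : Finset (Fin d → Fin q),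
    (∀ x ∈ C, ∀ y ∈ C, x ≠ y → 4 ≤ hammingDist x y) ∧ C.card = m}

lemma zero_mem (d q : ℕ) : 0 ∈ alphaSet d q :=
  ⟨∅, by simp, rfl⟩

lemma bdd (d q : ℕ) : BddAbove (alphaSet d q) := by
  refine ⟨Fintype.card (Fin d → Fin q), ?_⟩
  rintro m ⟨C, -, rfl⟩
  simpa using Finset.card_le_univ C

lemma le_alpha {d q : ℕ} (C : Finset (Fin d → Fin q))
    (h : ∀ x ∈ C, ∀ y ∈ C, x ≠ y → 4 ≤ hammingDist x y) :
    C.card ≤ hammingAlpha3 d q :=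
  le_csSup (bdd d q) ⟨C, h, rfl⟩

lemma exists_optimal (d q : ℕ) :
    ∃ C : Finset (Fin d → Fin q),
      (∀ x ∈ C, ∀ y ∈ C, x ≠ y → 4 ≤ hammingDist x y) ∧
      C.card = hammingAlpha3 d q :=
  Nat.sSup_mem ⟨0, zero_mem d q⟩ (bdd d q)

/-! ### Indicator words and elementary distance facts -/

section Delta

variable {ι : Type*} [Fintype ι] [DecidableEq ι]

/-- The indicator word of a coordinate. -/
def delta (i : ι) : ι → Fin 2 := fun j => if j = i then 1 else 0

lemma fin2_add_one_ne (a : Fin 2) : a + 1 ≠ a := by revert a; decide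
lemma fin2_cases : ∀ a : Fin 2, a = 0 ∨ a = 1 := by decide
lemma fin2_add_eq_zero : ∀ a b : Fin 2, a + b = 0 → a = b := by decide
lemma fin2_three_ones : (1 : Fin 2) + 1 + 1 ≠ 0 := by decide

omit [DecidableEq ι] in
lemma hammingDist_add_right (x y z : ι → Fin 2) :
    hammingDist (x + z) (y + z) = hammingDist x y := by
  simp only [hammingDist]
  congr 1
  apply Finset.filter_congr
  intro i _
  simp [add_left_inj]

lemma hammingDist_self_add_delta (x : ι → Fin 2) (i : ι) :
    hammingDist x (x + delta i) = 1 := by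
  simp only [hammingDist]
  have : (univ.filter fun j => x j ≠ (x + delta i) j) = {i} := by
    ext j
    rcases eq_or_ne j i with rfl | hj
    · simp [delta, (fin2_add_one_ne (x j)).symm]
    · simp [delta, hj]
  rw [this, Finset.card_singleton]

lemma hammingDist_delta (i j : ι) (hij : i ≠ j) :
    hammingDist (delta i) (delta j) = 2 := by
  simp only [hammingDist]
  have : (univ.filter fun k => delta i k ≠ delta j k) = {i, j} := by
    ext k
    simp only [Finset.mem_filter, Finset.mem_univ, true_and, Finset.mem_insert, Finset.mem_singleton]
    rcases eq_or_ne k i with rfl | hki <;> rcases eq_or_ne k j with rfl | hkj <;>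
      simp_all [delta]
  rw [this, Finset.card_insert_of_notMem (by simpa using hij), Finset.card_singleton]

lemma dist_ge_two {x x' : ι → Fin 2} (hxx : x = x' ∨ 4 ≤ hammingDist x x')
    {i j : ι} (hij : i ≠ j) : 2 ≤ hammingDist (x + delta i) (x' + delta j) := by
  rcases hxx with rfl | h4
  · have h : hammingDist (x + delta i) (x + delta j) = hammingDist (delta i) (delta j) := by
      rw [show x + delta i = delta i + x from add_comm _ _, show x + delta j = delta j + x from add_comm _ _,
        hammingDist_add_right]
    rw [h, hammingDist_delta i j hij]
  · have e1 := hammingDist_self_add_delta x i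
    have e2 := hammingDist_self_add_delta x' j
    have e2' : hammingDist (x' + delta j) x' = 1 := by rw [hammingDist_comm]; exact e2
    have chain : hammingDist x x' ≤ 1 + (hammingDist (x + delta i) (x' + delta j) + 1) := by
      calc hammingDist x x' ≤ hammingDist x (x + delta i)
            + hammingDist (x + delta i) x' := hammingDist_triangle _ _ _
        _ ≤ 1 + (hammingDist (x + delta i) (x' + delta j)
            + hammingDist (x' + delta j) x') := by
              rw [e1]; exact Nat.add_le_add_left (hammingDist_triangle _ _ _) 1
        _ = 1 + (hammingDist (x + delta i) (x' + delta j) + 1) := by rw [e2']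
    omega

end Delta

/-! ### The doubling construction -/

lemma doubling (d : ℕ) (C : Finset (Fin d → Fin 2))
    (hC : ∀ x ∈ C, ∀ y ∈ C, x ≠ y → 4 ≤ hammingDist x y) :
    ∃ D : Finset (Fin (2 * d) → Fin 2),
      (∀ x ∈ D, ∀ y ∈ D, x ≠ y → 4 ≤ hammingDist x y) ∧ D.card = d * C.card ^ 2 := by
  classical
  let e : Fin d ⊕ Fin d ≃ Fin (2 * d) := finSumFinEquiv.trans (finCongr (two_mul d).symm)
  let g : Fin d × (Fin d → Fin 2) × (Fin d → Fin 2) → (Fin (2 * d) → Fin 2) :=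
    fun p => Sum.elim (p.2.1 + delta p.1) (p.2.2 + delta p.1) ∘ e.symm
  have gdist : ∀ p q, hammingDist (g p) (g q) =
      hammingDist (p.2.1 + delta p.1) (q.2.1 + delta q.1) +
      hammingDist (p.2.2 + delta p.1) (q.2.2 + delta q.1) := by
    intro p q
    show hammingDist (_ ∘ e.symm) (_ ∘ e.symm) = _
    rw [hammingDist_comp_equiv e.symm, hammingDist_sumElim]
  have key : ∀ p ∈ (univ : Finset (Fin d)) ×ˢ C ×ˢ C, ∀ q ∈ (univ : Finset (Fin d)) ×ˢ C ×ˢ C,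
      p ≠ q → 4 ≤ hammingDist (g p) (g q) := by
    rintro ⟨i, x, y⟩ hp ⟨j, x', y'⟩ hq hne
    simp only [Finset.mem_product, Finset.mem_univ, true_and] at hp hq
    rw [gdist]
    dsimp only
    rcases eq_or_ne i j with rfl | hij
    · rw [hammingDist_add_right, hammingDist_add_right]
      have hxy : x ≠ x' ∨ y ≠ y' := by
        by_contra h
        push_neg at h
        exact hne (by simp [h.1, h.2])
      rcases hxy with h | h
      · have := hC x hp.1 x' hq.1 h; omega
      · have := hC y hp.2 y' hq.2 h; omega
    · have hx : x = x' ∨ 4 ≤ hammingDist x x' := by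
        rcases eq_or_ne x x' with h | h
        · exact Or.inl h
        · exact Or.inr (hC x hp.1 x' hq.1 h)
      have hy : y = y' ∨ 4 ≤ hammingDist y y' := by
        rcases eq_or_ne y y' with h | h
        · exact Or.inl h
        · exact Or.inr (hC y hp.2 y' hq.2 h)
      have h1 : 2 ≤ hammingDist (x + delta i) (x' + delta j) := dist_ge_two hx hij
      have h2 : 2 ≤ hammingDist (y + delta i) (y' + delta j) := dist_ge_two hy hij
      omega
  refine ⟨Finset.image g ((univ : Finset (Fin d)) ×ˢ C ×ˢ C), ?_, ?_⟩
  · intro a ha b hb hab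
    obtain ⟨p, hp, rfl⟩ := Finset.mem_image.mp ha
    obtain ⟨q, hq, rfl⟩ := Finset.mem_image.mp hb
    exact key p hp q hq (fun h => hab (by rw [h]))
  · rw [Finset.card_image_of_injOn, Finset.card_product, Finset.card_product,
      Finset.card_univ, Fintype.card_fin, sq]
    intro p hp q hq hgpq
    by_contra hne
    have := key p hp q hq hne
    rw [hgpq] at this
    simp at this

/-! ### The sphere-packing bound -/

lemma packing {ι : Type*} [Fintype ι] [DecidableEq ι] (C : Finset (ι → Fin 2))
    (hC : ∀ x ∈ C, ∀ y ∈ C, x ≠ y → 3 ≤ hammingDist x y) :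
    C.card * (Fintype.card ι + 1) ≤ 2 ^ Fintype.card ι := by
  classical
  let F : (ι → Fin 2) × Option ι → (ι → Fin 2) :=
    fun p => Option.rec p.1 (fun i => p.1 + delta i) p.2
  have Fdist : ∀ c (o : Option ι), hammingDist c (F (c, o)) ≤ 1 := by
    rintro c (_ | i)
    · simp [F]
    · exact le_of_eq (hammingDist_self_add_delta c i)
  have hinj : Set.InjOn F ((C ×ˢ (univ : Finset (Option ι)) : Finset _) : Set _) := by
    rintro ⟨c, o⟩ hp ⟨c', o'⟩ hq hF
    simp only [Finset.mem_coe, Finset.mem_product] at hp hq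
    have hcc : c = c' := by
      by_contra hne
      have h3 := hC c hp.1 c' hq.1 hne
      have t := hammingDist_triangle c (F (c, o)) c'
      have d1 := Fdist c o
      have d2 : hammingDist (F (c, o)) c' ≤ 1 := by
        rw [hF, hammingDist_comm]; exact Fdist c' o'
      omega
    subst hcc
    have ho : o = o' := by
      rcases o with _ | i <;> rcases o' with _ | j
      · rfl
      · exfalso
        have h := congrFun hF j
        simp only [F, delta, Pi.add_apply, if_pos rfl] at h
        exact fin2_add_one_ne (c j) h.symm
      · exfalso
        have h := congrFun hF i
        simp only [F, delta, Pi.add_apply, if_pos rfl] at h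
        exact fin2_add_one_ne (c i) h
      · rcases eq_or_ne i j with rfl | hij
        · rfl
        · exfalso
          have h := congrFun hF i
          simp only [F, delta, Pi.add_apply, if_pos rfl, if_neg (Ne.symm hij ∘ Eq.symm),
            add_zero] at h
          exact fin2_add_one_ne (c i) h
    rw [ho]
  calc C.card * (Fintype.card ι + 1)
      = (C ×ˢ (univ : Finset (Option ι))).card := by
        rw [Finset.card_product, Finset.card_univ, Fintype.card_option]
    _ = (Finset.image F (C ×ˢ univ)).card := (Finset.card_image_of_injOn hinj).symm
    _ ≤ (univ : Finset (ι → Fin 2)).card := Finset.card_le_univ _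
    _ = 2 ^ Fintype.card ι := by simp

lemma puncture_dist (n : ℕ) (x y : Fin (n + 1) → Fin 2) :
    hammingDist x y ≤ hammingDist (x ∘ Fin.castAdd 1) (y ∘ Fin.castAdd 1) + 1 := by
  let e : Fin n ⊕ Fin 1 ≃ Fin (n + 1) := finSumFinEquiv
  have hx : ∀ z : Fin (n + 1) → Fin 2,
      z ∘ e = Sum.elim (z ∘ Fin.castAdd 1) (z ∘ Fin.natAdd n) := by
    intro z; funext i; cases i <;> simp [e]
  have h1 : hammingDist x y = hammingDist (x ∘ e) (y ∘ e) :=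
    (hammingDist_comp_equiv e x y).symm
  rw [h1, hx, hx, hammingDist_sumElim]
  have : hammingDist (x ∘ Fin.natAdd n) (y ∘ Fin.natAdd n) ≤ 1 := by
    simpa using hammingDist_le_card_fintype
      (x := x ∘ Fin.natAdd n) (y := y ∘ Fin.natAdd n)
  omega

lemma card_mul_le (n : ℕ) (C : Finset (Fin (n + 1) → Fin 2))
    (hC : ∀ x ∈ C, ∀ y ∈ C, x ≠ y → 4 ≤ hammingDist x y) :
    C.card * (n + 1) ≤ 2 ^ n := by
  classical
  set π : (Fin (n + 1) → Fin 2) → (Fin n → Fin 2) := fun x => x ∘ Fin.castAdd 1 with hπ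
  have hinj : Set.InjOn π ↑C := by
    intro x hx y hy hxy
    by_contra hne
    have h4 := hC x hx y hy hne
    have hp : hammingDist x y ≤ hammingDist (π x) (π y) + 1 := puncture_dist n x y
    rw [hxy, hammingDist_self] at hp
    omega
  have hC' : ∀ a ∈ C.image π, ∀ b ∈ C.image π, a ≠ b → 3 ≤ hammingDist a b := by
    intro a ha b hb hab
    obtain ⟨x, hx, rfl⟩ := Finset.mem_image.mp ha
    obtain ⟨y, hy, rfl⟩ := Finset.mem_image.mp hb
    have hne : x ≠ y := fun h => hab (by rw [h])
    have h4 := hC x hx y hy hne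
    have hp : hammingDist x y ≤ hammingDist (π x) (π y) + 1 := puncture_dist n x y
    omega
  have := packing (C.image π) hC'
  rw [Finset.card_image_of_injOn hinj] at this
  simpa using this

lemma alpha_mul_le (n : ℕ) : hammingAlpha3 (n + 1) 2 * (n + 1) ≤ 2 ^ n := by
  obtain ⟨C, hC, hcard⟩ := exists_optimal (n + 1) 2
  rw [← hcard]
  exact card_mul_le n C hC

/-! ### The extended Hamming code -/

def synd (m : ℕ) : ((Fin m → Fin 2) → Fin 2) →+ Fin 2 × (Fin m → Fin 2) :=
  AddMonoidHom.mk' (fun x => (∑ v, x v, fun j => ∑ v, x v * v j)) (by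
    intro x y
    refine Prod.ext ?_ ?_
    · simp [Finset.sum_add_distrib]
    · funext j
      simp [add_mul, Finset.sum_add_distrib])

lemma synd_delta (m : ℕ) (w : Fin m → Fin 2) : synd m (delta w) = (1, w) := by
  refine Prod.ext ?_ ?_
  · show (∑ v, delta w v) = 1
    simp [delta, Finset.sum_ite_eq']
  · funext j
    show (∑ v, delta w v * v j) = w j
    simp [delta, ite_mul, Finset.sum_ite_eq']

lemma synd_surj (m : ℕ) : Function.Surjective (synd m) := by
  rintro ⟨a, w⟩
  fin_cases a
  · refine ⟨delta w + delta 0, ?_⟩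
    rw [map_add, synd_delta, synd_delta]
    refine Prod.ext ?_ ?_
    · show (1 : Fin 2) + 1 = 0; decide
    · show w + 0 = w; simp
  · exact ⟨delta w, synd_delta m w⟩

lemma card_ker (m : ℕ) :
    (univ.filter fun x : (Fin m → Fin 2) → Fin 2 => synd m x = 0).card
      = 2 ^ (2 ^ m - m - 1) := by
  classical
  have h1 : Nat.card ((Fin m → Fin 2) → Fin 2) =
      Nat.card (Fin 2 × (Fin m → Fin 2)) * Nat.card (synd m).ker := by
    rw [AddSubgroup.card_eq_card_quotient_mul_card_addSubgroup (synd m).ker]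
    congr 1
    exact Nat.card_congr (QuotientAddGroup.quotientKerEquivOfSurjective _ (synd_surj m)).toEquiv
  have hG : Nat.card ((Fin m → Fin 2) → Fin 2) = 2 ^ 2 ^ m := by
    simp [Nat.card_eq_fintype_card]
  have hH : Nat.card (Fin 2 × (Fin m → Fin 2)) = 2 ^ (m + 1) := by
    simp [Nat.card_eq_fintype_card, pow_succ, mul_comm]
  have hfil : (univ.filter fun x : (Fin m → Fin 2) → Fin 2 => synd m x = 0).card
      = Nat.card (synd m).ker := by
    rw [Nat.card_eq_fintype_card, ← Fintype.card_subtype]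
    exact (Fintype.card_congr (Equiv.subtypeEquivRight
      (fun x => (AddMonoidHom.mem_ker (f := synd m) (x := x))))).symm
  have hm : m + 1 ≤ 2 ^ m := Nat.succ_le_of_lt (Nat.lt_two_pow_self (n := m))
  have hsplit : (2 : ℕ) ^ 2 ^ m = 2 ^ (m + 1) * 2 ^ (2 ^ m - m - 1) := by
    rw [← pow_add]
    congr 1
    omega
  rw [hfil]
  have h2 := h1
  rw [hG, hH, hsplit] at h2
  exact (Nat.eq_of_mul_eq_mul_left (by positivity) h2).symm

lemma ker_dist (m : ℕ) (x y : (Fin m → Fin 2) → Fin 2)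
    (hx : synd m x = 0) (hy : synd m y = 0) (hne : x ≠ y) : 4 ≤ hammingDist x y := by
  classical
  set z : (Fin m → Fin 2) → Fin 2 := x - y with hzdef
  have hz0 : z ≠ 0 := sub_ne_zero.mpr hne
  have hzs : synd m z = 0 := by rw [hzdef, map_sub, hx, hy, sub_zero]
  set S := univ.filter (fun v => z v ≠ 0) with hSdef
  have hdist : hammingDist x y = S.card := by
    simp only [hammingDist, hSdef]
    congr 1
    apply Finset.filter_congr
    intro v _
    simp [hzdef, sub_ne_zero]
  have hz1 : ∀ v ∈ S, z v = 1 := by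
    intro v hv
    have h := (Finset.mem_filter.mp hv).2
    rcases fin2_cases (z v) with h0 | h1
    · exact absurd h0 h
    · exact h1
  have hsum1 : ∑ v, z v = 0 := congrArg Prod.fst hzs
  have hsum2 : ∀ j, ∑ v, z v * v j = 0 := fun j => congrFun (congrArg Prod.snd hzs) j
  have hsum1' : ∑ v ∈ S, z v = 0 := by
    rw [hSdef, Finset.sum_filter_ne_zero]
    exact hsum1
  have hsum2' : ∀ j, ∑ v ∈ S, z v * v j = 0 := by
    intro j
    rw [← hsum2 j]
    apply Finset.sum_subset (Finset.filter_subset _ _)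
    intro v _ hv
    have : z v = 0 := by
      by_contra h
      exact hv (Finset.mem_filter.mpr ⟨Finset.mem_univ v, h⟩)
    rw [this, zero_mul]
  rw [hdist]
  by_contra hlt
  push_neg at hlt
  have hcases : S.card = 0 ∨ S.card = 1 ∨ S.card = 2 ∨ S.card = 3 := by omega
  rcases hcases with h | h | h | h
  · rw [Finset.card_eq_zero] at h
    apply hz0
    funext v
    by_contra hv
    have : v ∈ S := Finset.mem_filter.mpr ⟨Finset.mem_univ v, hv⟩
    simp [h] at this
  · obtain ⟨a, ha⟩ := Finset.card_eq_one.mp h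
    have := hsum1'
    rw [ha, Finset.sum_singleton] at this
    rw [hz1 a (by simp [ha])] at this
    exact one_ne_zero this
  · obtain ⟨a, b, hab, hS2⟩ := Finset.card_eq_two.mp h
    have haS : a ∈ S := by simp [hS2]
    have hbS : b ∈ S := by simp [hS2]
    apply hab
    funext j
    have h2 := hsum2' j
    rw [hS2, Finset.sum_insert (by simpa using hab), Finset.sum_singleton,
      hz1 a haS, hz1 b hbS, one_mul, one_mul] at h2
    exact fin2_add_eq_zero (a j) (b j) h2
  · obtain ⟨a, b, c, hab, hac, hbc, hS3⟩ := Finset.card_eq_three.mp h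
    have h1 := hsum1'
    rw [hS3, Finset.sum_insert (by simp [hab, hac]), Finset.sum_insert (by simpa using hbc),
      Finset.sum_singleton, hz1 a (by simp [hS3]), hz1 b (by simp [hS3]),
      hz1 c (by simp [hS3])] at h1
    exact fin2_three_ones h1

lemma exists_hamming (m : ℕ) :
    ∃ C : Finset (Fin (2 ^ m) → Fin 2),
      (∀ x ∈ C, ∀ y ∈ C, x ≠ y → 4 ≤ hammingDist x y) ∧
      C.card = 2 ^ (2 ^ m - m - 1) := by
  classical
  have hcard : Fintype.card (Fin m → Fin 2) = 2 ^ m := by simp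
  let e : Fin (2 ^ m) ≃ (Fin m → Fin 2) := (Fintype.equivFinOfCardEq hcard).symm
  let K := univ.filter fun x : (Fin m → Fin 2) → Fin 2 => synd m x = 0
  have hinj : Function.Injective (fun x : (Fin m → Fin 2) → Fin 2 => x ∘ e) := by
    intro x y h
    funext v
    have := congrFun h (e.symm v)
    simpa using this
  refine ⟨K.image (fun x => x ∘ e), ?_, ?_⟩
  · intro a ha b hb hab
    obtain ⟨x, hx, rfl⟩ := Finset.mem_image.mp ha
    obtain ⟨y, hy, rfl⟩ := Finset.mem_image.mp hb
    have hne : x ≠ y := fun h => hab (by rw [h])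
    rw [hammingDist_comp_equiv e x y]
    exact ker_dist m x y (Finset.mem_filter.mp hx).2 (Finset.mem_filter.mp hy).2 hne
  · rw [Finset.card_image_of_injective _ hinj]
    exact card_ker m

end HA3

/-- **Corollary (doubling).**  Let `d ≥ 1` and suppose `α₃(H(d,2)) = ℓ`.  Then
`α₃(H(2d,2)) ≥ d * ℓ²`, with equality whenever `d = 2^r` for some positive integer `r`. -/
theorem hamming_alpha3_double (d ℓ : ℕ) (hd : 1 ≤ d) (hℓ : hammingAlpha3 d 2 = ℓ) :
    d * ℓ ^ 2 ≤ hammingAlpha3 (2 * d) 2 ∧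
    (∀ r : ℕ, 1 ≤ r → d = 2 ^ r → hammingAlpha3 (2 * d) 2 = d * ℓ ^ 2) := by
  have part1 : d * ℓ ^ 2 ≤ hammingAlpha3 (2 * d) 2 := by
    obtain ⟨C, hC, hcard⟩ := HA3.exists_optimal d 2
    obtain ⟨D, hD, hDcard⟩ := HA3.doubling d C hC
    have := HA3.le_alpha D hD
    rw [hDcard, hcard, hℓ] at this
    exact this
  refine ⟨part1, ?_⟩
  intro r hr hdr
  -- lower bound on ℓ from the extended Hamming code of length 2^r
  have hlow : 2 ^ (2 ^ r - r - 1) ≤ ℓ := by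
    obtain ⟨C, hC, hcard⟩ := HA3.exists_hamming r
    have h2 : hammingAlpha3 (2 ^ r) 2 = ℓ := by rw [← hdr]; exact hℓ
    have := HA3.le_alpha C hC
    rw [hcard, h2] at this
    exact this
  -- upper bound on α₃(H(2d,2)) from sphere packing
  have h2d : 2 * d = 2 ^ (r + 1) := by rw [hdr, pow_succ, mul_comm]
  have hone : 1 ≤ 2 ^ (r + 1) := Nat.one_le_two_pow
  have hup2 : hammingAlpha3 (2 ^ (r + 1)) 2 * 2 ^ (r + 1) ≤ 2 ^ (2 ^ (r + 1) - 1) := by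
    have h := HA3.alpha_mul_le (2 ^ (r + 1) - 1)
    have he : 2 ^ (r + 1) - 1 + 1 = 2 ^ (r + 1) := by omega
    rw [he] at h
    exact h
  have hr2 : r + 2 ≤ 2 ^ (r + 1) := Nat.succ_le_of_lt (Nat.lt_two_pow_self (n := r + 1))
  have hsplit : (2 : ℕ) ^ (2 ^ (r + 1) - 1)
      = 2 ^ (2 ^ (r + 1) - r - 2) * 2 ^ (r + 1) := by
    rw [← pow_add]
    congr 1
    omega
  have hup : hammingAlpha3 (2 ^ (r + 1)) 2 ≤ 2 ^ (2 ^ (r + 1) - r - 2) := by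
    rw [hsplit] at hup2
    exact Nat.le_of_mul_le_mul_right hup2 (by positivity)
  -- arithmetic: 2^(2^(r+1) - r - 2) = 2^r * (2^(2^r - r - 1))^2
  have hrle : r + 1 ≤ 2 ^ r := Nat.succ_le_of_lt (Nat.lt_two_pow_self (n := r))
  have hps : (2 : ℕ) ^ (r + 1) = 2 * 2 ^ r := by rw [pow_succ, mul_comm]
  have harith : (2 : ℕ) ^ (2 ^ (r + 1) - r - 2)
      = 2 ^ r * (2 ^ (2 ^ r - r - 1)) ^ 2 := by
    rw [← pow_mul, ← pow_add]
    congr 1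
    omega
  have hfinal : hammingAlpha3 (2 * d) 2 ≤ d * ℓ ^ 2 := by
    rw [h2d]
    calc hammingAlpha3 (2 ^ (r + 1)) 2 ≤ 2 ^ (2 ^ (r + 1) - r - 2) := hup
      _ = 2 ^ r * (2 ^ (2 ^ r - r - 1)) ^ 2 := harith
      _ ≤ 2 ^ r * ℓ ^ 2 :=
          Nat.mul_le_mul_left _ (Nat.pow_le_pow_left hlow 2)
      _ = d * ℓ ^ 2 := by rw [hdr]
  exact le_antisymm hfinal part1
end

section
/- For every integer r ≥ 2, the 3-independence number of the Hamming graph H(d,2) with d = 2^r − 1 satisfies α₃(H(2^r − 1, 2)) = 2^{2^r − 2 − r} (that is, α₃(H(d,2)) = 2^{d−1}/(d+1) for d = 2^r − 1). -/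
/-! ## Auxiliary: characters on (ZMod 2)^n and the LP/Fourier upper bound -/

namespace HammingAlpha3Aux

open Finset

/-- The sign character on `ZMod 2`, valued in `ℤ`. -/
def ee (b : ZMod 2) : ℤ := if b = 0 then 1 else -1

lemma ee_add (b c : ZMod 2) : ee (b + c) = ee b * ee c := by
  revert b c; decide

lemma ee_zero : ee 0 = 1 := rfl

variable {n : ℕ}

/-- The character `a ↦ (-1)^{⟨a,x⟩}`. -/
def chi (a x : Fin n → ZMod 2) : ℤ := ∏ i, ee (a i * x i)

lemma chi_add_left (a b x : Fin n → ZMod 2) :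
    chi (a + b) x = chi a x * chi b x := by
  unfold chi
  rw [← Finset.prod_mul_distrib]
  refine Finset.prod_congr rfl fun i _ => ?_
  simp [Pi.add_apply, add_mul, ee_add]

lemma chi_add_right (a x y : Fin n → ZMod 2) :
    chi a (x + y) = chi a x * chi a y := by
  unfold chi
  rw [← Finset.prod_mul_distrib]
  refine Finset.prod_congr rfl fun i _ => ?_
  simp [Pi.add_apply, mul_add, ee_add]

lemma chi_zero_right (a : Fin n → ZMod 2) : chi a 0 = 1 := by
  unfold chi; simp [ee_zero]

lemma chi_zero_left (x : Fin n → ZMod 2) : chi 0 x = 1 := by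
  unfold chi; simp [ee_zero]

/-- `s a = n - 2 (weight of a)`, as a signed sum. -/
def sInt (a : Fin n → ZMod 2) : ℤ := ∑ i, ee (a i)

/-- The total character sum. -/
def Phi (w : Fin n → ZMod 2) : ℤ := ∑ a : Fin n → ZMod 2, chi a w

lemma Phi_zero : Phi (0 : Fin n → ZMod 2) = 2 ^ n := by
  unfold Phi
  simp only [chi_zero_right]
  rw [Finset.sum_const, Finset.card_univ]
  simp [Fintype.card_fun]

lemma chi_single_left (i : Fin n) (w : Fin n → ZMod 2) :
    chi (Pi.single i 1) w = ee (w i) := by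
  unfold chi
  rw [Finset.prod_eq_single i]
  · simp
  · intro j _ hj
    simp [Pi.single_eq_of_ne hj, ee_zero]
  · simp

lemma Phi_ne_zero {w : Fin n → ZMod 2} (hw : w ≠ 0) : Phi w = 0 := by
  obtain ⟨i, hi⟩ : ∃ i, w i ≠ 0 := by
    by_contra h
    push_neg at h
    exact hw (funext fun i => h i)
  have hwi : w i = 1 := by
    revert hi; generalize w i = b; revert b; decide
  have key : Phi w = -Phi w := by
    conv_lhs =>
      rw [Phi, ← Equiv.sum_comp (Equiv.addLeft (Pi.single i 1 : Fin n → ZMod 2))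
        (fun a => chi a w)]
    have : ∀ a : Fin n → ZMod 2,
        chi ((Equiv.addLeft (Pi.single i 1 : Fin n → ZMod 2)) a) w = -chi a w := by
      intro a
      simp only [Equiv.coe_addLeft]
      rw [chi_add_left, chi_single_left, hwi]
      simp [ee]
    rw [Finset.sum_congr rfl fun a _ => this a, Finset.sum_neg_distrib, Phi]
  linarith


lemma chi_single_right (a : Fin n → ZMod 2) (i : Fin n) :
    chi a (Pi.single i 1) = ee (a i) := by
  unfold chi
  rw [Finset.prod_eq_single i]
  · simp
  · intro j _ hj
    simp [Pi.single_eq_of_ne hj, ee_zero]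
  · simp

lemma s_mul_chi (a w : Fin n → ZMod 2) :
    sInt a * chi a w = ∑ i, chi a (w + Pi.single i 1) := by
  have : ∀ i : Fin n, chi a (w + Pi.single i 1) = ee (a i) * chi a w := by
    intro i
    rw [chi_add_right, chi_single_right, mul_comm]
  rw [Finset.sum_congr rfl fun i _ => this i, ← Finset.sum_mul, sInt]

/-- Moments: `A j w = ∑_a s(a)^j χ_a(w)`. -/
def A (j : ℕ) (w : Fin n → ZMod 2) : ℤ :=
  ∑ a : Fin n → ZMod 2, (sInt a) ^ j * chi a w

lemma A_zero_eq (w : Fin n → ZMod 2) : A 0 w = Phi w := by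
  unfold A Phi; simp

lemma A_succ (j : ℕ) (w : Fin n → ZMod 2) :
    A (j + 1) w = ∑ i, A j (w + Pi.single i 1) := by
  unfold A
  rw [Finset.sum_comm]
  refine Finset.sum_congr rfl fun a _ => ?_
  rw [← Finset.mul_sum, ← s_mul_chi, pow_succ]
  ring

lemma norm_le_add_single (w u : Fin n → ZMod 2) (i : Fin n)
    (hu : u = w + Pi.single i 1) :
    hammingNorm w ≤ hammingNorm u + 1 := by
  unfold hammingNorm
  have hsub : (Finset.univ.filter fun l => w l ≠ 0) ⊆
      insert i (Finset.univ.filter fun l => u l ≠ 0) := by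
    intro l hl
    simp only [Finset.mem_filter, Finset.mem_univ, true_and] at hl
    rcases eq_or_ne l i with rfl | hli
    · exact Finset.mem_insert_self _ _
    · refine Finset.mem_insert_of_mem ?_
      simp only [Finset.mem_filter, Finset.mem_univ, true_and, hu, Pi.add_apply]
      rwa [Pi.single_eq_of_ne hli, add_zero]
  calc (Finset.univ.filter fun l => w l ≠ 0).card
      ≤ (insert i (Finset.univ.filter fun l => u l ≠ 0)).card :=
        Finset.card_le_card hsub
    _ ≤ (Finset.univ.filter fun l => u l ≠ 0).card + 1 := Finset.card_insert_le _ _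

lemma A_eq_zero_of_norm {j : ℕ} {w : Fin n → ZMod 2}
    (hw : j + 1 ≤ hammingNorm w) : A j w = 0 := by
  induction j generalizing w with
  | zero =>
      rw [A_zero_eq, Phi_ne_zero]
      intro h
      rw [h, hammingNorm_zero] at hw
      omega
  | succ j ih =>
      rw [A_succ]
      refine Finset.sum_eq_zero fun i _ => ih ?_
      have := norm_le_add_single w (w + Pi.single i 1) i rfl
      omega

lemma single_ne_zero' (i : Fin n) : (Pi.single i 1 : Fin n → ZMod 2) ≠ 0 := by
  intro h
  have := congrFun h i
  simp at this

lemma single_add_single_ne (i j : Fin n) (hij : j ≠ i) :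
    (Pi.single i 1 + Pi.single j 1 : Fin n → ZMod 2) ≠ 0 := by
  intro h
  have := congrFun h j
  simp only [Pi.add_apply, Pi.zero_apply, Pi.single_eq_same] at this
  rw [Pi.single_eq_of_ne hij, zero_add] at this
  exact one_ne_zero this

lemma coordSum_single (i : Fin n) :
    ∑ l, (Pi.single i 1 : Fin n → ZMod 2) l = 1 := by
  rw [Finset.sum_eq_single i]
  · simp
  · intro j _ hj; exact Pi.single_eq_of_ne hj 1
  · simp

lemma triple_single_ne (i j k : Fin n) :
    (Pi.single i 1 + Pi.single j 1 + Pi.single k 1 : Fin n → ZMod 2) ≠ 0 := by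
  intro h
  have h1 := congrArg (fun v : Fin n → ZMod 2 => ∑ l, v l) h
  simp only [Pi.add_apply, Finset.sum_add_distrib, Pi.zero_apply,
    Finset.sum_const_zero] at h1
  rw [coordSum_single, coordSum_single, coordSum_single] at h1
  have h2 : (1 + 1 + 1 : ZMod 2) = 1 := by decide
  rw [h2] at h1
  exact one_ne_zero h1

lemma A_zero_at_zero : A 0 (0 : Fin n → ZMod 2) = 2 ^ n := by
  rw [A_zero_eq, Phi_zero]

lemma A_one_at_zero : A 1 (0 : Fin n → ZMod 2) = 0 := by
  rw [A_succ]
  refine Finset.sum_eq_zero fun i _ => ?_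
  rw [zero_add, A_zero_eq, Phi_ne_zero (single_ne_zero' i)]

lemma A_two_at_zero : A 2 (0 : Fin n → ZMod 2) = n * 2 ^ n := by
  rw [A_succ]
  have : ∀ i : Fin n, A 1 ((0 : Fin n → ZMod 2) + Pi.single i 1) = 2 ^ n := by
    intro i
    rw [zero_add, A_succ, Finset.sum_eq_single i]
    · have : (Pi.single i 1 + Pi.single i 1 : Fin n → ZMod 2) = 0 := by
        funext l
        simp only [Pi.add_apply, Pi.zero_apply]
        have : ∀ x : ZMod 2, x + x = 0 := by decide
        exact this _
      rw [this, A_zero_at_zero]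
    · intro j _ hj
      rw [A_zero_eq, Phi_ne_zero (single_add_single_ne i j hj)]
    · simp
  rw [Finset.sum_congr rfl fun i _ => this i, Finset.sum_const, Finset.card_univ,
    Fintype.card_fin, nsmul_eq_mul]

lemma A_three_at_zero : A 3 (0 : Fin n → ZMod 2) = 0 := by
  rw [A_succ]
  refine Finset.sum_eq_zero fun i _ => ?_
  rw [A_succ]
  refine Finset.sum_eq_zero fun j _ => ?_
  rw [A_succ]
  refine Finset.sum_eq_zero fun k _ => ?_
  rw [A_zero_eq]
  refine Phi_ne_zero ?_
  rw [zero_add]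
  exact triple_single_ne i j k

/-- The LP certificate weight `g a = (s² - 1)(s + n)` where `s = sInt a`. -/
def g (a : Fin n → ZMod 2) : ℤ := ((sInt a) ^ 2 - 1) * (sInt a + n)

lemma g_decomp (w : Fin n → ZMod 2) :
    ∑ a : Fin n → ZMod 2, g a * chi a w
      = A 3 w + n * A 2 w - A 1 w - n * A 0 w := by
  have key : ∀ a : Fin n → ZMod 2, g a * chi a w
      = sInt a ^ 3 * chi a w + (n : ℤ) * (sInt a ^ 2 * chi a w)
        - sInt a ^ 1 * chi a w - (n : ℤ) * (sInt a ^ 0 * chi a w) := by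
    intro a; unfold g; ring
  unfold A
  rw [Finset.sum_congr rfl fun a _ => key a, Finset.sum_sub_distrib,
    Finset.sum_sub_distrib, Finset.sum_add_distrib, ← Finset.mul_sum,
    ← Finset.mul_sum]

lemma crux_vanish {w : Fin n → ZMod 2} (hw : 4 ≤ hammingNorm w) :
    ∑ a : Fin n → ZMod 2, g a * chi a w = 0 := by
  rw [g_decomp, A_eq_zero_of_norm (by omega), A_eq_zero_of_norm (by omega),
    A_eq_zero_of_norm (by omega), A_eq_zero_of_norm (by omega)]
  ring

lemma crux_zero : ∑ a : Fin n → ZMod 2, g a = 2 ^ n * (n * (n - 1) : ℤ) := by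
  have : ∑ a : Fin n → ZMod 2, g a = ∑ a : Fin n → ZMod 2, g a * chi a 0 := by
    refine Finset.sum_congr rfl fun a _ => ?_
    rw [chi_zero_right, mul_one]
  rw [this, g_decomp, A_three_at_zero, A_two_at_zero, A_one_at_zero, A_zero_at_zero]
  ring


lemma ee_ge_neg_one (b : ZMod 2) : -1 ≤ ee b := by
  unfold ee; split <;> norm_num

lemma ee_add_one (b : ZMod 2) : ee b + 1 = 2 * (if b = 0 then 1 else 0) := by
  unfold ee; split <;> norm_num

lemma sInt_add_n_even (a : Fin n → ZMod 2) : Even (sInt a + n) := by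
  have h : sInt a + n = ∑ i, (ee (a i) + 1) := by
    rw [Finset.sum_add_distrib, ← sInt, Finset.sum_const, Finset.card_univ,
      Fintype.card_fin, nsmul_eq_mul, mul_one]
  have h2 : sInt a + n = 2 * ∑ i, (if a i = 0 then 1 else 0 : ℤ) := by
    rw [h, Finset.sum_congr rfl fun i _ => ee_add_one (a i), ← Finset.mul_sum]
  exact ⟨_, by rw [h2]; ring⟩

lemma sInt_odd (hodd : Odd n) (a : Fin n → ZMod 2) : Odd (sInt a) := by
  have h := sInt_add_n_even a
  rcases hodd with ⟨k, hk⟩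
  rw [Int.even_add] at h
  rw [Int.not_even_iff_odd.symm]
  intro he
  have : Even (n : ℤ) := h.mp he
  rcases this with ⟨m, hm⟩
  omega

lemma sInt_ge (a : Fin n → ZMod 2) : -(n : ℤ) ≤ sInt a := by
  have : ∑ _i : Fin n, (-1 : ℤ) ≤ sInt a :=
    Finset.sum_le_sum fun i _ => ee_ge_neg_one (a i)
  simpa using this

lemma sInt_le (a : Fin n → ZMod 2) : sInt a ≤ (n : ℤ) := by
  have : sInt a ≤ ∑ _i : Fin n, (1 : ℤ) :=
    Finset.sum_le_sum fun i _ => by unfold ee; split <;> norm_num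
  simpa using this

lemma g_nonneg (hodd : Odd n) (a : Fin n → ZMod 2) : 0 ≤ g a := by
  have hs := sInt_odd hodd a
  have hne : sInt a ≠ 0 := by
    intro h; rw [h] at hs; exact (Int.not_odd_iff_even.symm.mp Even.zero) hs
  have h1 : 1 ≤ |sInt a| := Int.one_le_abs hne
  have hsq : 1 ≤ sInt a ^ 2 := by nlinarith [sq_abs (sInt a)]
  have hge := sInt_ge a
  unfold g
  have : (0 : ℤ) ≤ sInt a + n := by linarith
  nlinarith

lemma sInt_zero : sInt (0 : Fin n → ZMod 2) = n := by
  unfold sInt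
  simp [ee_zero]

lemma g_zero_eval : g (0 : Fin n → ZMod 2) = ((n : ℤ) ^ 2 - 1) * (2 * n) := by
  unfold g
  rw [sInt_zero]
  ring

lemma zmod2_add_self (x : Fin n → ZMod 2) : x + x = 0 := by
  funext l
  have : ∀ b : ZMod 2, b + b = 0 := by decide
  exact this _

/-- The main LP upper bound: a binary code of odd length `n ≥ 2` with pairwise
Hamming distance at least 4 has at most `2^n / (2(n+1))` codewords. -/
theorem card_le_of_dist4 (hodd : Odd n) (h2 : 2 ≤ n)
    (C : Finset (Fin n → ZMod 2))
    (hC : ∀ x ∈ C, ∀ y ∈ C, x ≠ y → 4 ≤ hammingDist x y) :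
    2 * (n + 1) * C.card ≤ 2 ^ n := by
  set M : ℤ := (C.card : ℤ) with hM
  set K : ℤ := ∑ a : Fin n → ZMod 2, g a * (∑ c ∈ C, chi a c) ^ 2 with hK
  have keyeq : K = M * (2 ^ n * (n * (n - 1) : ℤ)) := by
    have expand : ∀ a : Fin n → ZMod 2,
        g a * (∑ c ∈ C, chi a c) ^ 2 = ∑ c ∈ C, ∑ c' ∈ C, g a * chi a (c + c') := by
      intro a
      rw [sq, Finset.sum_mul_sum]
      rw [Finset.mul_sum]
      refine Finset.sum_congr rfl fun c _ => ?_
      rw [Finset.mul_sum]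
      refine Finset.sum_congr rfl fun c' _ => ?_
      rw [chi_add_right]
    rw [hK, Finset.sum_congr rfl fun a _ => expand a]
    rw [Finset.sum_comm]
    have inner : ∀ c ∈ C, ∑ a : Fin n → ZMod 2, ∑ c' ∈ C, g a * chi a (c + c')
        = 2 ^ n * (n * (n - 1) : ℤ) := by
      intro c hc
      rw [Finset.sum_comm]
      have term : ∀ c' ∈ C, ∑ a : Fin n → ZMod 2, g a * chi a (c + c')
          = if c' = c then 2 ^ n * (n * (n - 1) : ℤ) else 0 := by
        intro c' hc'
        rcases eq_or_ne c' c with rfl | hne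
        · rw [if_pos rfl, zmod2_add_self]
          have : ∀ a : Fin n → ZMod 2, g a * chi a 0 = g a := fun a => by
            rw [chi_zero_right, mul_one]
          rw [Finset.sum_congr rfl fun a _ => this a, crux_zero]
        · rw [if_neg hne]
          refine crux_vanish ?_
          have hd := hC c hc c' hc' (fun h => hne (h ▸ rfl))
          have : hammingDist c c' = hammingNorm (c + c') := by
            rw [hammingDist_eq_hammingNorm]
            congr 1
            funext l
            have : ∀ b b' : ZMod 2, -b + b' = b + b' := by decide
            exact this _ _
          omega
      rw [Finset.sum_congr rfl term]
      simp [hc]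
    rw [Finset.sum_congr rfl inner, Finset.sum_const, nsmul_eq_mul, hM]
  have keylow : ((n : ℤ) ^ 2 - 1) * (2 * n) * M ^ 2 ≤ K := by
    have h0 : g (0 : Fin n → ZMod 2) * (∑ c ∈ C, chi (0 : Fin n → ZMod 2) c) ^ 2 ≤ K := by
      rw [hK]
      refine Finset.single_le_sum (f := fun a => g a * (∑ c ∈ C, chi a c) ^ 2)
        (fun a _ => mul_nonneg (g_nonneg hodd a) (sq_nonneg _)) (Finset.mem_univ 0)
    have : (∑ c ∈ C, chi (0 : Fin n → ZMod 2) c) = M := by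
      rw [Finset.sum_congr rfl fun c _ => chi_zero_left c, Finset.sum_const,
        nsmul_eq_mul, mul_one, hM]
    rwa [g_zero_eval, this] at h0
  -- arithmetic conclusion
  have hMnn : 0 ≤ M := by positivity
  rcases eq_or_lt_of_le hMnn with hM0 | hMpos
  · have h' : (C.card : ℤ) = 0 := by rw [← hM]; exact hM0.symm
    have : C.card = 0 := by exact_mod_cast h'
    simp [this]
  · have hZ : 2 * ((n : ℤ) + 1) * M ≤ 2 ^ n := by
      have h2' : (2 : ℤ) ≤ n := by exact_mod_cast h2
      have hpos : (0 : ℤ) < n * (n - 1) * M :=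
        mul_pos (mul_pos (by linarith) (by linarith)) hMpos
      refine le_of_mul_le_mul_right ?_ hpos
      calc 2 * ((n : ℤ) + 1) * M * (n * (n - 1) * M)
          = ((n : ℤ) ^ 2 - 1) * (2 * n) * M ^ 2 := by ring
        _ ≤ K := keylow
        _ = M * (2 ^ n * (n * (n - 1) : ℤ)) := keyeq
        _ = 2 ^ n * (n * (n - 1) * M) := by ring
    rw [hM] at hZ
    exact_mod_cast hZ


/-! ### Lower bound: the even-weight subcode of the Hamming code -/

/-- Index type: nonzero vectors of `(ZMod 2)^r`. -/
abbrev J (r : ℕ) : Type := {v : Fin r → ZMod 2 // v ≠ 0}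

lemma zmod2_elem_cases (b : ZMod 2) : b = 0 ∨ b = 1 := by revert b; decide

lemma zmod2_pi_cancel {r : ℕ} (t u : Fin r → ZMod 2) : u + (t + u) = t := by
  rw [add_comm t u, ← add_assoc, zmod2_add_self, zero_add]

/-- The parity-check map of the even-weight subcode of the Hamming code. -/
def phi (r : ℕ) : ((J r) → ZMod 2) →+ ((Fin r → ZMod 2) × ZMod 2) where
  toFun x := (∑ v : J r, x v • v.val, ∑ v : J r, x v)
  map_zero' := by simp
  map_add' x y := by
    simp [Pi.add_apply, add_smul, Finset.sum_add_distrib, Prod.mk_add_mk]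

lemma phi_single {r : ℕ} (v0 : J r) : phi r (Pi.single v0 1) = (v0.val, 1) := by
  unfold phi
  simp only [AddMonoidHom.coe_mk, ZeroHom.coe_mk]
  refine Prod.ext ?_ ?_
  · show (∑ v : J r, Pi.single v0 1 v • v.val) = v0.val
    rw [Finset.sum_eq_single v0]
    · rw [Pi.single_eq_same, one_smul]
    · intro v _ hv
      rw [Pi.single_eq_of_ne hv, zero_smul]
    · simp
  · show (∑ v : J r, Pi.single v0 1 v) = 1
    rw [Finset.sum_eq_single v0]
    · rw [Pi.single_eq_same]
    · intro v _ hv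
      rw [Pi.single_eq_of_ne hv]
    · simp

lemma card_fun_r (r : ℕ) : Fintype.card (Fin r → ZMod 2) = 2 ^ r := by
  rw [Fintype.card_fun, ZMod.card, Fintype.card_fin]

lemma exists_notin {r : ℕ} (hr : 2 ≤ r) (s : Finset (Fin r → ZMod 2))
    (hs : s.card ≤ 3) : ∃ u, u ∉ s := by
  have h4 : 4 ≤ Fintype.card (Fin r → ZMod 2) := by
    rw [card_fun_r]
    calc 4 = 2 ^ 2 := rfl
      _ ≤ 2 ^ r := Nat.pow_le_pow_right (by norm_num) hr
  have : 0 < sᶜ.card := by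
    rw [Finset.card_compl]
    omega
  obtain ⟨u, hu⟩ := Finset.card_pos.mp this
  exact ⟨u, Finset.mem_compl.mp hu⟩

lemma phi_surj {r : ℕ} (hr : 2 ≤ r) : Function.Surjective (phi r) := by
  rintro ⟨t, b⟩
  rcases zmod2_elem_cases b with rfl | rfl
  · -- b = 0
    rcases eq_or_ne t 0 with rfl | ht
    · exact ⟨0, by rw [map_zero]; rfl⟩
    · obtain ⟨u, hu⟩ := exists_notin hr {0, t} (by
        calc ({0, t} : Finset (Fin r → ZMod 2)).card ≤ 2 :=
          Finset.card_insert_le _ _ |>.trans (by simp)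
        _ ≤ 3 := by norm_num)
      have hu0 : u ≠ 0 := fun h => hu (by rw [h]; exact Finset.mem_insert_self _ _)
      have hut : u ≠ t := fun h => hu (by rw [h]; simp)
      have htu : t + u ≠ 0 := by
        intro h
        have : u = t := by
          have := congrArg (fun w => u + w) h
          simpa [zmod2_pi_cancel] using this.symm
        exact hut this
      refine ⟨Pi.single (⟨u, hu0⟩ : J r) 1 + Pi.single (⟨t + u, htu⟩ : J r) 1, ?_⟩
      rw [map_add, phi_single, phi_single, Prod.mk_add_mk]
      refine Prod.ext ?_ ?_
      · show u + (t + u) = t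
        exact zmod2_pi_cancel t u
      · show (1 + 1 : ZMod 2) = 0
        decide
  · -- b = 1
    rcases eq_or_ne t 0 with rfl | ht
    · obtain ⟨u, hu⟩ := exists_notin hr {0} (by simp)
      have hu0 : u ≠ 0 := by simpa using hu
      obtain ⟨u', hu'⟩ := exists_notin hr {0, u} (by
        calc ({0, u} : Finset (Fin r → ZMod 2)).card ≤ 2 :=
          Finset.card_insert_le _ _ |>.trans (by simp)
        _ ≤ 3 := by norm_num)
      have hu'0 : u' ≠ 0 := fun h => hu' (by rw [h]; exact Finset.mem_insert_self _ _)
      have hu'u : u' ≠ u := fun h => hu' (by rw [h]; simp)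
      have hw : u + u' ≠ 0 := by
        intro h
        have : u' = u := by
          have := congrArg (fun w => u' + w) h
          simpa [zmod2_pi_cancel] using this.symm
        exact hu'u this
      refine ⟨Pi.single (⟨u, hu0⟩ : J r) 1 + Pi.single (⟨u', hu'0⟩ : J r) 1
        + Pi.single (⟨u + u', hw⟩ : J r) 1, ?_⟩
      rw [map_add, map_add, phi_single, phi_single, phi_single,
        Prod.mk_add_mk, Prod.mk_add_mk]
      refine Prod.ext ?_ ?_
      · show u + u' + (u + u') = 0
        exact zmod2_add_self _
      · show (1 + 1 + 1 : ZMod 2) = 1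
        decide
    · exact ⟨Pi.single (⟨t, ht⟩ : J r) 1, phi_single _⟩

lemma code_dist {r : ℕ} (x y : J r → ZMod 2) (hx : phi r x = 0) (hy : phi r y = 0)
    (hxy : x ≠ y) : 4 ≤ hammingDist x y := by
  set z : J r → ZMod 2 := x - y with hzdef
  have hz : phi r z = 0 := by rw [hzdef, map_sub, hx, hy, sub_zero]
  have hz0 : z ≠ 0 := sub_ne_zero.mpr hxy
  have hdist : hammingDist x y = hammingNorm z := by
    rw [hammingDist_comm, hammingDist_eq_hammingNorm, neg_add_eq_sub]
  rw [hdist]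
  by_contra hlt
  push_neg at hlt
  set S : Finset (J r) := Finset.univ.filter (fun v => z v ≠ 0) with hSdef
  have hS : hammingNorm z = S.card := rfl
  have hone : ∀ v ∈ S, z v = 1 := by
    intro v hv
    rw [hSdef, Finset.mem_filter] at hv
    rcases zmod2_elem_cases (z v) with h | h
    · exact absurd h hv.2
    · exact h
  have hzero : ∀ v, v ∉ S → z v = 0 := by
    intro v hv
    rw [hSdef, Finset.mem_filter] at hv
    push_neg at hv
    simpa using hv (Finset.mem_univ v)
  -- parity: |S| is even
  have hsum2 : (∑ v : J r, z v) = 0 := congrArg Prod.snd hz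
  have hcard0 : ((S.card : ℕ) : ZMod 2) = 0 := by
    have e1 : (∑ v ∈ S, z v) = ∑ v : J r, z v :=
      Finset.sum_subset (Finset.subset_univ S) (fun v _ hv => hzero v hv)
    have e2 : (∑ v ∈ S, z v) = S.card := by
      rw [Finset.sum_congr rfl hone, Finset.sum_const, nsmul_eq_mul, mul_one]
    rw [← e2, e1, hsum2]
  have heven : 2 ∣ S.card := (ZMod.natCast_eq_zero_iff _ _).mp hcard0
  have hne0 : S.card ≠ 0 := by
    rw [← hS]
    simpa [hammingNorm_ne_zero_iff] using hz0
  have hcard2 : S.card = 2 := by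
    rw [← hS] at heven hne0 ⊢
    omega
  obtain ⟨a, b, hab, hSab⟩ := Finset.card_eq_two.mp hcard2
  -- first parity check
  have hsum1 : (∑ v : J r, z v • v.val) = 0 := congrArg Prod.fst hz
  have e1 : (∑ v ∈ S, z v • v.val) = ∑ v : J r, z v • v.val :=
    Finset.sum_subset (Finset.subset_univ S)
      (fun v _ hv => by rw [hzero v hv, zero_smul])
  have e2 : (∑ v ∈ S, z v • v.val) = a.val + b.val := by
    rw [hSab, Finset.sum_pair hab,
      hone a (by rw [hSab]; exact Finset.mem_insert_self _ _),
      hone b (by rw [hSab]; simp), one_smul, one_smul]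
  have habv : a.val + b.val = 0 := by rw [← e2, e1, hsum1]
  have : a.val = b.val := by
    have := congrArg (fun w => w + b.val) habv
    simpa [add_assoc, zmod2_add_self, zmod2_pi_cancel] using this
  exact hab (Subtype.ext this)

lemma add_two_le_two_pow {r : ℕ} (hr : 2 ≤ r) : r + 2 ≤ 2 ^ r := by
  induction r with
  | zero => omega
  | succ k ih =>
      rcases Nat.lt_or_ge k 2 with hk | hk
      · interval_cases k <;> simp_all
      · have := ih (by omega)
        have h2 : 2 ^ (k + 1) = 2 * 2 ^ k := by ring
        omega

lemma card_J (r : ℕ) : Fintype.card (J r) = 2 ^ r - 1 := by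
  have := Fintype.card_subtype_compl (fun v : Fin r → ZMod 2 => v = 0)
  rw [Fintype.card_subtype_eq, card_fun_r] at this
  exact this

theorem lower_exists (r : ℕ) (hr : 2 ≤ r) :
    ∃ C : Finset (J r → ZMod 2),
      (∀ x ∈ C, ∀ y ∈ C, x ≠ y → 4 ≤ hammingDist x y) ∧
      C.card = 2 ^ (2 ^ r - 2 - r) := by
  classical
  refine ⟨Finset.univ.filter (fun x => phi r x = 0), ?_, ?_⟩
  · intro x hx y hy hxy
    rw [Finset.mem_filter] at hx hy
    exact code_dist x y hx.2 hy.2 hxy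
  · -- cardinality via first isomorphism theorem
    have hker : (Finset.univ.filter (fun x => phi r x = 0)).card
        = Nat.card (phi r).ker := by
      have e : {x : J r → ZMod 2 // x ∈ Finset.univ.filter (fun x => phi r x = 0)}
          ≃ (phi r).ker :=
        Equiv.subtypeEquivRight fun x => by
          simp [AddMonoidHom.mem_ker]
      rw [← Fintype.card_coe, ← Nat.card_eq_fintype_card]
      exact Nat.card_congr e
    have hquot := AddSubgroup.card_eq_card_quotient_mul_card_addSubgroup (phi r).ker
    have hq : Nat.card ((J r → ZMod 2) ⧸ (phi r).ker)
        = Nat.card ((Fin r → ZMod 2) × ZMod 2) :=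
      Nat.card_congr (QuotientAddGroup.quotientKerEquivOfSurjective
        (phi r) (phi_surj hr)).toEquiv
    have hG : Nat.card (J r → ZMod 2) = 2 ^ (2 ^ r - 1) := by
      rw [Nat.card_eq_fintype_card, Fintype.card_fun, ZMod.card, card_J]
    have hcod : Nat.card ((Fin r → ZMod 2) × ZMod 2) = 2 ^ (r + 1) := by
      rw [Nat.card_eq_fintype_card, Fintype.card_prod, card_fun_r, ZMod.card,
        pow_succ]
    rw [hq, hcod, hG] at hquot
    have hexp : (2 : ℕ) ^ (2 ^ r - 1) = 2 ^ (r + 1) * 2 ^ (2 ^ r - 2 - r) := by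
      rw [← pow_add]
      congr 1
      have := add_two_le_two_pow hr
      omega
    rw [hexp] at hquot
    have := Nat.eq_of_mul_eq_mul_left (show 0 < 2 ^ (r + 1) by positivity) hquot.symm
    rw [hker, ← this]


/-! ### Transfer between `Fin 2` and `ZMod 2` words -/

lemma hammingDist_comp_bij {ι κ β γ : Type*} [Fintype ι] [Fintype κ]
    [DecidableEq β] [DecidableEq γ] (e : ι ≃ κ) {f : γ → β}
    (hf : Function.Injective f) (x y : κ → γ) :
    hammingDist (fun i => f (x (e i))) (fun i => f (y (e i))) = hammingDist x y := by
  unfold hammingDist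
  refine Finset.card_bij (fun i _ => e i) ?_ ?_ ?_
  · intro i hi
    simp only [Finset.mem_filter, Finset.mem_univ, true_and] at hi ⊢
    exact fun h => hi (by rw [h])
  · intro i _ j _ hij
    exact e.injective hij
  · intro k hk
    refine ⟨e.symm k, ?_, by simp⟩
    simp only [Finset.mem_filter, Finset.mem_univ, true_and,
      Equiv.apply_symm_apply] at hk ⊢
    exact fun h => hk (hf h)

/-- The canonical bijection `Fin 2 ≃ ZMod 2`. -/
def m2 : Fin 2 ≃ ZMod 2 where
  toFun b := if b = 0 then 0 else 1
  invFun z := if z = 0 then 0 else 1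
  left_inv := by decide
  right_inv := by decide

lemma odd_two_pow_sub_one {r : ℕ} (hr : 1 ≤ r) : Odd (2 ^ r - 1) :=
  Nat.Even.sub_odd Nat.one_le_two_pow
    (Nat.even_pow.mpr ⟨even_two, by omega⟩) odd_one

end HammingAlpha3Aux

/-- For every integer `r ≥ 2`, the hypercube `H(2^r - 1, 2)` satisfies
`α₃(H(2^r - 1, 2)) = 2^(2^r - 2 - r)`, i.e. `α₃(H(d,2)) = 2^(d-1)/(d+1)` for `d = 2^r - 1`. -/
theorem hamming_alpha3_pow_two_sub_one (r : ℕ) (hr : 2 ≤ r) :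
    hammingAlpha3 (2 ^ r - 1) 2 = 2 ^ (2 ^ r - 2 - r) := by
  classical
  open HammingAlpha3Aux in
  set d : ℕ := 2 ^ r - 1 with hd
  set N : ℕ := 2 ^ (2 ^ r - 2 - r) with hN
  have h2r : r + 2 ≤ 2 ^ r := add_two_le_two_pow hr
  have hd2 : 2 ≤ d := by omega
  have hdodd : Odd d := odd_two_pow_sub_one (by omega)
  have hd1 : d + 1 = 2 ^ r := by omega
  have hupper : ∀ m ∈ {m : ℕ | ∃ C : Finset (Fin d → Fin 2),
      (∀ x ∈ C, ∀ y ∈ C, x ≠ y → 4 ≤ hammingDist x y) ∧ C.card = m}, m ≤ N := by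
    rintro m ⟨C, hC, rfl⟩
    set F : (Fin d → Fin 2) → (Fin d → ZMod 2) := fun x i => m2 (x i) with hF
    have hFinj : Function.Injective F := fun x y h =>
      funext fun i => m2.injective (congrFun h i)
    have hdist : ∀ x' ∈ C, ∀ y' ∈ C, F x' ≠ F y' → 4 ≤ hammingDist (F x') (F y') := by
      intro x' hx' y' hy' hne
      have heq : hammingDist (F x') (F y') = hammingDist x' y' :=
        hammingDist_comp_bij (Equiv.refl (Fin d)) m2.injective x' y'
      rw [heq]
      exact hC x' hx' y' hy' (fun h => hne (by rw [h]))
    have key := card_le_of_dist4 hdodd hd2 (C.image F) ?_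
    · rw [Finset.card_image_of_injective _ hFinj] at key
      have h2d1 : 2 * (d + 1) = 2 ^ (r + 1) := by rw [hd1, pow_succ]; ring
      have h2d : (2 : ℕ) ^ d = 2 ^ (r + 1) * N := by
        rw [hN, ← pow_add]
        congr 1
        omega
      rw [h2d1, h2d] at key
      exact Nat.le_of_mul_le_mul_left key (by positivity)
    · intro x hx y hy hxy
      obtain ⟨x', hx', rfl⟩ := Finset.mem_image.mp hx
      obtain ⟨y', hy', rfl⟩ := Finset.mem_image.mp hy
      exact hdist x' hx' y' hy' hxy
  have hmem : N ∈ {m : ℕ | ∃ C : Finset (Fin d → Fin 2),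
      (∀ x ∈ C, ∀ y ∈ C, x ≠ y → 4 ≤ hammingDist x y) ∧ C.card = m} := by
    obtain ⟨C, hC, hcard⟩ := lower_exists r hr
    have hcardJ : Fintype.card (J r) = d := by rw [card_J, hd]
    set E : Fin d ≃ J r := (Fintype.equivFinOfCardEq hcardJ).symm with hE
    set G : (J r → ZMod 2) → (Fin d → Fin 2) := fun z i => m2.symm (z (E i)) with hG
    have hGinj : Function.Injective G := by
      intro z z' h
      funext v
      have hi := congrFun h (E.symm v)
      simp only [hG] at hi
      have := m2.symm.injective hi
      rwa [Equiv.apply_symm_apply] at this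
    refine ⟨C.image G, ?_, by rw [Finset.card_image_of_injective _ hGinj, hcard]⟩
    intro x hx y hy hxy
    obtain ⟨z, hz, rfl⟩ := Finset.mem_image.mp hx
    obtain ⟨z', hz', rfl⟩ := Finset.mem_image.mp hy
    have heq : hammingDist (G z) (G z') = hammingDist z z' :=
      hammingDist_comp_bij E m2.symm.injective z z'
    rw [heq]
    exact hC z hz z' hz' (fun h => hxy (by rw [h]))
  have hne : {m : ℕ | ∃ C : Finset (Fin d → Fin 2),
      (∀ x ∈ C, ∀ y ∈ C, x ≠ y → 4 ≤ hammingDist x y) ∧ C.card = m}.Nonempty :=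
    ⟨0, ⟨∅, fun x hx => absurd hx (by simp), rfl⟩⟩
  rw [hammingAlpha3]
  exact le_antisymm (csSup_le hne hupper) (le_csSup ⟨N, hupper⟩ hmem)
end

section
/- Let q ≥ 2 be an integer. If there exist three mutually orthogonal Latin squares of order q, then the 3-independence number of the Hamming graph H(5,q) satisfies α₃(H(5,q)) = q². -/
/-- A Latin square of order `q`: every row and every column is a bijection. -/
def IsLatinSquare {q : ℕ} (L : Fin q → Fin q → Fin q) : Prop :=
  (∀ i : Fin q, Function.Bijective fun j => L i j) ∧
  (∀ j : Fin q, Function.Bijective fun i => L i j)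

/-- Two Latin squares are orthogonal if superimposing them yields each ordered pair of
symbols at most (hence exactly) once. -/
def AreOrthogonal {q : ℕ} (L₁ L₂ : Fin q → Fin q → Fin q) : Prop :=
  Function.Injective fun p : Fin q × Fin q => (L₁ p.1 p.2, L₂ p.1 p.2)

/-- Upper bound: any code in `H(5,q)` with min distance `≥ 4` has size `≤ q²`. -/
lemma code_card_le (q : ℕ) (C : Finset (Fin 5 → Fin q))
    (hC : ∀ x ∈ C, ∀ y ∈ C, x ≠ y → 4 ≤ hammingDist x y) : C.card ≤ q ^ 2 := by
  have hinj : Set.InjOn (fun x : Fin 5 → Fin q => (x 0, x 1)) C := by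
    intro x hx y hy hxy
    by_contra hne
    have h4 := hC x hx y hy hne
    have hsub : ({i | x i ≠ y i} : Finset (Fin 5)) ⊆ ({2, 3, 4} : Finset (Fin 5)) := by
      intro i hi
      simp only [Finset.mem_filter, Finset.mem_univ, true_and] at hi
      fin_cases i <;> simp_all [Prod.ext_iff]
    have := Finset.card_le_card hsub
    unfold hammingDist at h4
    have h3 : (({2, 3, 4} : Finset (Fin 5)).card) ≤ 3 := by decide
    omega
  calc C.card = (C.image fun x => (x 0, x 1)).card := (Finset.card_image_of_injOn hinj).symm
    _ ≤ Fintype.card (Fin q × Fin q) := Finset.card_le_univ _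
    _ = q ^ 2 := by simp [sq]

/-- **Theorem.**  Let `q ≥ 2`.  If there exist three mutually orthogonal Latin squares
of order `q`, then `α₃(H(5,q)) = q²`. -/
theorem hamming_alpha3_five_of_three_MOLS (q : ℕ) (hq : 2 ≤ q)
    (L₁ L₂ L₃ : Fin q → Fin q → Fin q)
    (h₁ : IsLatinSquare L₁) (h₂ : IsLatinSquare L₂) (h₃ : IsLatinSquare L₃)
    (h₁₂ : AreOrthogonal L₁ L₂) (h₁₃ : AreOrthogonal L₁ L₃)
    (h₂₃ : AreOrthogonal L₂ L₃) :
    hammingAlpha3 5 q = q ^ 2 := by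
  set f : Fin q × Fin q → (Fin 5 → Fin q) :=
    fun p => ![p.1, p.2, L₁ p.1 p.2, L₂ p.1 p.2, L₃ p.1 p.2] with hf
  have hfinj : Function.Injective f := by
    intro p p' h
    have h0 := congrFun h 0
    have h1 := congrFun h 1
    simp [hf] at h0 h1
    exact Prod.ext h0 h1
  -- key claim: if two coordinates agree then the parameters agree
  have key : ∀ p p' : Fin q × Fin q, ∀ i j : Fin 5, i ≠ j →
      f p i = f p' i → f p j = f p' j → p = p' := by
    intro p p' i j hij hi hj
    have row : ∀ (L : Fin q → Fin q → Fin q), IsLatinSquare L →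
        p.1 = p'.1 → L p.1 p.2 = L p'.1 p'.2 → p = p' := by
      intro L hL he hv
      rw [← he] at hv
      exact Prod.ext he ((hL.1 p.1).injective hv)
    have col : ∀ (L : Fin q → Fin q → Fin q), IsLatinSquare L →
        p.2 = p'.2 → L p.1 p.2 = L p'.1 p'.2 → p = p' := by
      intro L hL he hv
      rw [← he] at hv
      exact Prod.ext ((hL.2 p.2).injective hv) he
    have orth : ∀ (A B : Fin q → Fin q → Fin q), AreOrthogonal A B →
        A p.1 p.2 = A p'.1 p'.2 → B p.1 p.2 = B p'.1 p'.2 → p = p' := by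
      intro A B hAB ha hb
      exact hAB (Prod.ext ha hb)
    fin_cases i <;> fin_cases j <;> simp [hf] at hi hj hij ⊢ <;>
      first
        | exact Prod.ext hi hj
        | exact Prod.ext hj hi
        | exact row L₁ h₁ hi hj
        | exact row L₁ h₁ hj hi
        | exact row L₂ h₂ hi hj
        | exact row L₂ h₂ hj hi
        | exact row L₃ h₃ hi hj
        | exact row L₃ h₃ hj hi
        | exact col L₁ h₁ hi hj
        | exact col L₁ h₁ hj hi
        | exact col L₂ h₂ hi hj
        | exact col L₂ h₂ hj hi
        | exact col L₃ h₃ hi hj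
        | exact col L₃ h₃ hj hi
        | exact orth L₁ L₂ h₁₂ hi hj
        | exact orth L₁ L₂ h₁₂ hj hi
        | exact orth L₁ L₃ h₁₃ hi hj
        | exact orth L₁ L₃ h₁₃ hj hi
        | exact orth L₂ L₃ h₂₃ hi hj
        | exact orth L₂ L₃ h₂₃ hj hi
  set C : Finset (Fin 5 → Fin q) := Finset.univ.image f with hCdef
  have hdist : ∀ x ∈ C, ∀ y ∈ C, x ≠ y → 4 ≤ hammingDist x y := by
    intro x hx y hy hxy
    obtain ⟨p, -, rfl⟩ := Finset.mem_image.mp hx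
    obtain ⟨p', -, rfl⟩ := Finset.mem_image.mp hy
    have hpp : p ≠ p' := fun h => hxy (by rw [h])
    have hagree : ({i | f p i = f p' i} : Finset (Fin 5)).card ≤ 1 := by
      by_contra hle
      push_neg at hle
      obtain ⟨i, hi, j, hj, hij⟩ := Finset.one_lt_card.mp hle
      simp only [Finset.mem_filter, Finset.mem_univ, true_and] at hi hj
      exact hpp (key p p' i j hij hi hj)
    have hsplit := Finset.card_filter_add_card_filter_not
      (s := (Finset.univ : Finset (Fin 5))) (p := fun i => f p i = f p' i)
    simp only [Finset.card_univ, Fintype.card_fin] at hsplit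
    simp only [hammingDist, ne_eq]
    omega
  have hcard : C.card = q ^ 2 := by
    rw [hCdef, Finset.card_image_of_injective _ hfinj]
    simp [sq]
  have hmem : q ^ 2 ∈ {m : ℕ | ∃ C : Finset (Fin 5 → Fin q),
      (∀ x ∈ C, ∀ y ∈ C, x ≠ y → 4 ≤ hammingDist x y) ∧ C.card = m} :=
    ⟨C, hdist, hcard⟩
  have hub : ∀ m ∈ {m : ℕ | ∃ C : Finset (Fin 5 → Fin q),
      (∀ x ∈ C, ∀ y ∈ C, x ≠ y → 4 ≤ hammingDist x y) ∧ C.card = m}, m ≤ q ^ 2 := by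
    rintro m ⟨D, hD, rfl⟩
    exact code_card_le q D hD
  unfold hammingAlpha3
  exact le_antisymm (csSup_le ⟨q ^ 2, hmem⟩ hub) (le_csSup ⟨q ^ 2, hub⟩ hmem)
end

section
/- Let ℓ > 2 be an integer and let O_ℓ be the Odd graph. If ℓ is odd, then α₃(O_ℓ) ≤ C(2ℓ, ℓ)·(ℓ² − 2ℓ + 2)/(2·(ℓ+2)·(ℓ−1)·(2ℓ−1)); if ℓ is even, then α₃(O_ℓ) ≤ C(2ℓ, ℓ)·(ℓ² − 4ℓ + 2)/(2·(ℓ+1)·(ℓ−2)·(2ℓ−1)). Here C(2ℓ, ℓ) denotes the binomial coefficient. -/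
/-- A finite set `S` of vertices is `k`-independent if any two distinct vertices of `S`
are at graph distance greater than `k`. -/
def SimpleGraph.IsKIndepSet {V : Type*} (G : SimpleGraph V) (k : ℕ) (S : Finset V) : Prop :=
  ∀ u ∈ S, ∀ v ∈ S, u ≠ v → k < G.dist u v

/-- The `k`-independence number of a graph: the maximum size of a `k`-independent set. -/
noncomputable def SimpleGraph.kIndepNum {V : Type*} [Fintype V]
    (G : SimpleGraph V) (k : ℕ) : ℕ :=
  sSup {m : ℕ | ∃ S : Finset V, G.IsKIndepSet k S ∧ S.card = m}

/-- The Odd graph `O_ℓ`: vertices are the `(ℓ-1)`-element subsets of a `(2ℓ-1)`-element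
set, two vertices being adjacent iff the corresponding subsets are disjoint. -/
def oddGraph (ℓ : ℕ) : SimpleGraph {s : Finset (Fin (2 * ℓ - 1)) // s.card = ℓ - 1} where
  Adj a b := a ≠ b ∧ Disjoint (a : Finset (Fin (2 * ℓ - 1))) (b : Finset (Fin (2 * ℓ - 1)))
  symm := by
    constructor
    intro a b h
    exact ⟨h.1.symm, h.2.symm⟩
  loopless := by
    constructor
    intro a h
    exact h.1 rfl

open Finset

namespace OddProof

abbrev Om (ℓ : ℕ) := Fin (2 * ℓ - 1)
abbrev L (ℓ j : ℕ) := {s : Finset (Om ℓ) // s.card = j}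
abbrev Vt (ℓ : ℕ) := L ℓ (ℓ - 1)

variable {ℓ : ℕ}

/-- Master counting lemma: number of `k`-subsets between `A` and `B`. -/
lemma card_between (k : ℕ) (A B : Finset (Om ℓ)) (hAB : A ⊆ B) (hA : A.card ≤ k) :
    (univ.filter (fun s : L ℓ k => A ⊆ s.1 ∧ s.1 ⊆ B)).card
      = (B.card - A.card).choose (k - A.card) := by
  have hdisj : ∀ w : Finset (Om ℓ), w ⊆ B \ A → Disjoint w A := by
    intro w hw
    refine Finset.disjoint_left.2 ?_
    intro a haw haA
    exact (Finset.mem_sdiff.1 (hw haw)).2 haA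
  have h1 : (univ.filter (fun s : L ℓ k => A ⊆ s.1 ∧ s.1 ⊆ B)).card
      = (powersetCard (k - A.card) (B \ A)).card := by
    refine Finset.card_bij' (fun s _ => s.1 \ A)
      (fun w hw => (⟨w ∪ A, by
        have hw' := Finset.mem_powersetCard.1 hw
        rw [Finset.card_union_of_disjoint (hdisj w hw'.1), hw'.2, Nat.sub_add_cancel hA]⟩ : L ℓ k))
      ?_ ?_ ?_ ?_
    · intro s hs
      have hs' := (Finset.mem_filter.1 hs).2
      refine Finset.mem_powersetCard.2 ⟨Finset.sdiff_subset_sdiff hs'.2 Finset.Subset.rfl, ?_⟩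
      rw [Finset.card_sdiff_of_subset hs'.1, s.2]
    · intro w hw
      have hw' := Finset.mem_powersetCard.1 hw
      refine Finset.mem_filter.2 ⟨Finset.mem_univ _, Finset.subset_union_right, ?_⟩
      exact Finset.union_subset (fun a haw => (Finset.mem_sdiff.1 (hw'.1 haw)).1) hAB
    · intro s hs
      have hs' := (Finset.mem_filter.1 hs).2
      exact Subtype.ext (Finset.sdiff_union_of_subset hs'.1)
    · intro w hw
      have hw' := Finset.mem_powersetCard.1 hw
      exact Finset.union_sdiff_cancel_right (hdisj w hw'.1)
  rw [h1, Finset.card_powersetCard, Finset.card_sdiff_of_subset hAB]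

lemma card_between_zero (k : ℕ) (A B : Finset (Om ℓ)) (h : ¬ A ⊆ B) :
    (univ.filter (fun s : L ℓ k => A ⊆ s.1 ∧ s.1 ⊆ B)).card = 0 := by
  rw [Finset.card_eq_zero, Finset.filter_eq_empty_iff]
  intro s _
  rintro ⟨h1, h2⟩
  exact h (h1.trans h2)


lemma disj_iff_subset_compl (x u : Finset (Om ℓ)) : Disjoint x u ↔ x ⊆ uᶜ := by
  constructor
  · intro h a ha
    exact Finset.mem_compl.2 (fun hau => (Finset.disjoint_left.1 h) ha hau)
  · intro h
    refine Finset.disjoint_left.2 ?_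
    intro a ha hau
    exact (Finset.mem_compl.1 (h ha)) hau

lemma compl_card (hℓ : 2 < ℓ) (u : Vt ℓ) : u.1ᶜ.card = ℓ := by
  rw [Finset.card_compl, u.2]
  simp only [Fintype.card_fin]
  omega

/-- helper: sum of an `ite` with constant value. -/
lemma sum_ite_count {α : Type*} [Fintype α] (P : α → Prop) [DecidablePred P] (c : ℝ) :
    (∑ a : α, (if P a then c else 0)) = ((univ.filter P).card : ℝ) * c := by
  rw [← Finset.sum_boole (p := P) (s := univ), Finset.sum_mul]
  congr 1
  ext a
  by_cases h : P a <;> simp [h]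

section ops

variable (ℓ : ℕ)

def opN (j : ℕ) (g : L ℓ j → ℝ) : Vt ℓ → ℝ :=
  fun u => ∑ x : L ℓ j, (if x.1 ⊆ u.1 then g x else 0)

def opM (j : ℕ) (g : L ℓ j → ℝ) : Vt ℓ → ℝ :=
  fun u => ∑ x : L ℓ j, (if Disjoint x.1 u.1 then g x else 0)

def opA (f : Vt ℓ → ℝ) : Vt ℓ → ℝ :=
  fun u => ∑ v : Vt ℓ, (if Disjoint u.1 v.1 then f v else 0)

def opD (i j : ℕ) (g : L ℓ j → ℝ) : L ℓ i → ℝ :=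
  fun y => ∑ x : L ℓ j, (if y.1 ⊆ x.1 then g x else 0)

def opU (i : ℕ) (h : L ℓ i → ℝ) : L ℓ (i+1) → ℝ :=
  fun x => ∑ y : L ℓ i, (if y.1 ⊆ x.1 then h y else 0)

def ip (f g : Vt ℓ → ℝ) : ℝ := ∑ u : Vt ℓ, f u * g u

end ops

variable (ℓ : ℕ)

lemma opA_apply (f : Vt ℓ → ℝ) (u : Vt ℓ) :
    opA ℓ f u = ∑ v : Vt ℓ, (if Disjoint u.1 v.1 then f v else 0) := rfl

/-- `A ∘ N_j = (ℓ - j) • M_j`. -/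
lemma A_comp_N (hℓ : 2 < ℓ) (j : ℕ) (hj : j ≤ ℓ - 1) (g : L ℓ j → ℝ) :
    opA ℓ (opN ℓ j g) = fun u => ((ℓ - j : ℕ) : ℝ) * opM ℓ j g u := by
  funext u
  show (∑ v : Vt ℓ, (if Disjoint u.1 v.1 then ∑ x : L ℓ j, (if x.1 ⊆ v.1 then g x else 0) else 0))
    = _
  have step1 : ∀ v : Vt ℓ, (if Disjoint u.1 v.1 then ∑ x : L ℓ j, (if x.1 ⊆ v.1 then g x else 0) else 0)
      = ∑ x : L ℓ j, (if x.1 ⊆ v.1 ∧ v.1 ⊆ u.1ᶜ then g x else 0) := by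
    intro v
    by_cases h : Disjoint u.1 v.1
    · rw [if_pos h]
      apply Finset.sum_congr rfl
      intro x _
      have hv : v.1 ⊆ u.1ᶜ := (disj_iff_subset_compl v.1 u.1).1 h.symm
      by_cases hx : x.1 ⊆ v.1
      · rw [if_pos hx, if_pos ⟨hx, hv⟩]
      · rw [if_neg hx, if_neg (fun hc => hx hc.1)]
    · rw [if_neg h, eq_comm, Finset.sum_eq_zero]
      intro x _
      rw [if_neg]
      rintro ⟨-, hv⟩
      exact h (((disj_iff_subset_compl v.1 u.1).2 hv).symm)
  rw [Finset.sum_congr rfl (fun v _ => step1 v), Finset.sum_comm]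
  have step2 : ∀ x : L ℓ j,
      (∑ v : Vt ℓ, (if x.1 ⊆ v.1 ∧ v.1 ⊆ u.1ᶜ then g x else 0))
      = ((ℓ - j : ℕ) : ℝ) * (if Disjoint x.1 u.1 then g x else 0) := by
    intro x
    rw [sum_ite_count]
    by_cases hd : Disjoint x.1 u.1
    · have hsub : x.1 ⊆ u.1ᶜ := (disj_iff_subset_compl x.1 u.1).1 hd
      rw [card_between (ℓ-1) x.1 u.1ᶜ hsub (by rw [x.2]; exact hj), if_pos hd,
        compl_card hℓ u, x.2]
      have h1 : (ℓ - j).choose (ℓ - 1 - j) = ℓ - j := by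
        have h2 : ℓ - 1 - j ≤ ℓ - j := by omega
        have h3 : (ℓ - j) - (ℓ - 1 - j) = 1 := by omega
        rw [← Nat.choose_symm h2, h3, Nat.choose_one_right]
      rw [h1]
    · have hsub : ¬ x.1 ⊆ u.1ᶜ := fun hc => hd ((disj_iff_subset_compl x.1 u.1).2 hc)
      rw [card_between_zero (ℓ-1) x.1 u.1ᶜ hsub, if_neg hd]
      simp
  rw [Finset.sum_congr rfl (fun x _ => step2 x), ← Finset.mul_sum]
  rfl

/-- count of `i`-subsets of a fixed set `C`. -/
lemma count_sub (i : ℕ) (C : Finset (Om ℓ)) :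
    ((univ.filter (fun y : L ℓ i => y.1 ⊆ C)).card : ℕ) = C.card.choose i := by
  have h : (univ.filter (fun y : L ℓ i => y.1 ⊆ C))
      = (univ.filter (fun y : L ℓ i => ∅ ⊆ y.1 ∧ y.1 ⊆ C)) := by
    apply Finset.filter_congr
    intro y _
    simp
  rw [h, card_between i ∅ C (Finset.empty_subset C) (by simp)]
  simp

/-- alternating binomial sum. -/
lemma alt_sum (j T : ℕ) (hT : T ≤ j) :
    (∑ i ∈ range (j+1), ((-1:ℝ))^i * (T.choose i : ℝ)) = if T = 0 then 1 else 0 := by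
  have hrestrict : (∑ i ∈ range (j+1), ((-1:ℝ))^i * (T.choose i : ℝ))
      = ∑ i ∈ range (T+1), ((-1:ℝ))^i * (T.choose i : ℝ) := by
    rw [eq_comm]
    apply Finset.sum_subset
    · exact Finset.range_subset_range.2 (by omega)
    · intro i _ hi
      rw [Finset.mem_range, not_lt] at hi
      rw [Nat.choose_eq_zero_of_lt (by omega)]
      simp
  rw [hrestrict]
  have h := Int.alternating_sum_range_choose (n := T)
  have hcast : (∑ i ∈ range (T+1), ((-1:ℝ))^i * (T.choose i : ℝ))
      = ((∑ i ∈ range (T+1), ((-1:ℤ))^i * (T.choose i : ℤ) : ℤ) : ℝ) := by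
    push_cast
    rfl
  rw [hcast, h]
  by_cases hT0 : T = 0 <;> simp [hT0]

/-- `M_j = ∑_{i ≤ j} (-1)^i N_i ∘ D_{i,j}` (inclusion–exclusion). -/
lemma M_eq_sum_N_D (j : ℕ) (hj : j ≤ ℓ - 1) (g : L ℓ j → ℝ) :
    opM ℓ j g = fun u => ∑ i ∈ range (j+1), ((-1:ℝ))^i * opN ℓ i (opD ℓ i j g) u := by
  funext u
  have expand : ∀ i, opN ℓ i (opD ℓ i j g) u
      = ∑ x : L ℓ j, ((u.1 ∩ x.1).card.choose i : ℝ) * g x := by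
    intro i
    show (∑ y : L ℓ i, (if y.1 ⊆ u.1 then ∑ x : L ℓ j, (if y.1 ⊆ x.1 then g x else 0) else 0)) = _
    have step1 : ∀ y : L ℓ i,
        (if y.1 ⊆ u.1 then ∑ x : L ℓ j, (if y.1 ⊆ x.1 then g x else 0) else 0)
        = ∑ x : L ℓ j, (if y.1 ⊆ u.1 ∩ x.1 then g x else 0) := by
      intro y
      by_cases h : y.1 ⊆ u.1
      · rw [if_pos h]
        apply Finset.sum_congr rfl
        intro x _
        by_cases hx : y.1 ⊆ x.1
        · rw [if_pos hx, if_pos (Finset.subset_inter h hx)]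
        · rw [if_neg hx, if_neg (fun hc => hx (hc.trans Finset.inter_subset_right))]
      · rw [if_neg h, eq_comm, Finset.sum_eq_zero]
        intro x _
        rw [if_neg (fun hc => h (hc.trans Finset.inter_subset_left))]
    rw [Finset.sum_congr rfl (fun y _ => step1 y), Finset.sum_comm]
    apply Finset.sum_congr rfl
    intro x _
    rw [sum_ite_count, count_sub]
  have swap : (∑ i ∈ range (j+1), ((-1:ℝ))^i * opN ℓ i (opD ℓ i j g) u)
      = ∑ x : L ℓ j, (∑ i ∈ range (j+1), ((-1:ℝ))^i * ((u.1 ∩ x.1).card.choose i : ℝ)) * g x := by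
    rw [Finset.sum_congr rfl (fun i _ => by rw [expand i, Finset.mul_sum])]
    rw [Finset.sum_comm]
    apply Finset.sum_congr rfl
    intro x _
    rw [Finset.sum_mul]
    apply Finset.sum_congr rfl
    intro i _
    ring
  rw [swap, eq_comm]
  show (∑ x : L ℓ j, _) = (∑ x : L ℓ j, (if Disjoint x.1 u.1 then g x else 0))
  apply Finset.sum_congr rfl
  intro x _
  have hcard : (u.1 ∩ x.1).card ≤ j := by
    calc (u.1 ∩ x.1).card ≤ x.1.card := Finset.card_le_card Finset.inter_subset_right
    _ = j := x.2
  rw [alt_sum j (u.1 ∩ x.1).card hcard]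
  by_cases hd : Disjoint x.1 u.1
  · have h0 : (u.1 ∩ x.1).card = 0 := by
      rw [Finset.card_eq_zero, ← Finset.disjoint_iff_inter_eq_empty]
      exact hd.symm
    rw [if_pos h0, if_pos hd, one_mul]
  · have h0 : ¬ (u.1 ∩ x.1).card = 0 := by
      rw [Finset.card_eq_zero, ← Finset.disjoint_iff_inter_eq_empty]
      exact fun hc => hd hc.symm
    rw [if_neg h0, if_neg hd, zero_mul]

/-- `N_{i+1} ∘ U_i = (ℓ - 1 - i) • N_i`. -/
lemma N_comp_U (hℓ : 2 < ℓ) (i : ℕ) (hi : i + 1 ≤ ℓ - 1) (h : L ℓ i → ℝ) :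
    opN ℓ (i+1) (opU ℓ i h) = fun u => ((ℓ - 1 - i : ℕ) : ℝ) * opN ℓ i h u := by
  funext u
  show (∑ x : L ℓ (i+1), (if x.1 ⊆ u.1 then ∑ y : L ℓ i, (if y.1 ⊆ x.1 then h y else 0) else 0)) = _
  have step1 : ∀ x : L ℓ (i+1),
      (if x.1 ⊆ u.1 then ∑ y : L ℓ i, (if y.1 ⊆ x.1 then h y else 0) else 0)
      = ∑ y : L ℓ i, (if y.1 ⊆ x.1 ∧ x.1 ⊆ u.1 then h y else 0) := by
    intro x
    by_cases hx : x.1 ⊆ u.1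
    · rw [if_pos hx]
      apply Finset.sum_congr rfl
      intro y _
      by_cases hy : y.1 ⊆ x.1
      · rw [if_pos hy, if_pos ⟨hy, hx⟩]
      · rw [if_neg hy, if_neg (fun hc => hy hc.1)]
    · rw [if_neg hx, eq_comm, Finset.sum_eq_zero]
      intro y _
      exact if_neg (fun hc => hx hc.2)
  rw [Finset.sum_congr rfl (fun x _ => step1 x), Finset.sum_comm]
  have step2 : ∀ y : L ℓ i,
      (∑ x : L ℓ (i+1), (if y.1 ⊆ x.1 ∧ x.1 ⊆ u.1 then h y else 0))
      = ((ℓ - 1 - i : ℕ) : ℝ) * (if y.1 ⊆ u.1 then h y else 0) := by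
    intro y
    rw [sum_ite_count]
    by_cases hy : y.1 ⊆ u.1
    · rw [card_between (i+1) y.1 u.1 hy (by rw [y.2]; omega), if_pos hy, u.2, y.2]
      have : (i + 1) - i = 1 := by omega
      rw [this, Nat.choose_one_right]
    · rw [card_between_zero (i+1) y.1 u.1 hy, if_neg hy]
      simp
  rw [Finset.sum_congr rfl (fun y _ => step2 y), ← Finset.mul_sum]
  rfl

/-- `D_{j,j} = id`. -/
lemma D_self (j : ℕ) (g : L ℓ j → ℝ) : opD ℓ j j g = g := by
  funext y
  show (∑ x : L ℓ j, (if y.1 ⊆ x.1 then g x else 0)) = g y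
  have h : ∀ x : L ℓ j, (if y.1 ⊆ x.1 then g x else 0) = (if x = y then g x else 0) := by
    intro x
    apply if_congr _ rfl rfl
    constructor
    · intro hs
      exact (Subtype.ext (Finset.eq_of_subset_of_card_le hs (by rw [x.2, y.2])).symm)
    · intro he
      rw [he]
  rw [Finset.sum_congr rfl (fun x _ => h x), Finset.sum_ite_eq' univ y g, if_pos (mem_univ y)]

/-- `N_{ℓ-1}` is the identity. -/
lemma N_top (f : Vt ℓ → ℝ) : opN ℓ (ℓ-1) f = f := by
  funext u
  show (∑ x : L ℓ (ℓ-1), (if x.1 ⊆ u.1 then f x else 0)) = f u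
  have h : ∀ x : L ℓ (ℓ-1), (if x.1 ⊆ u.1 then f x else 0) = (if x = u then f x else 0) := by
    intro x
    apply if_congr _ rfl rfl
    constructor
    · intro hs
      exact Subtype.ext (Finset.eq_of_subset_of_card_le hs (by rw [x.2, u.2]))
    · intro he
      rw [he]
  rw [Finset.sum_congr rfl (fun x _ => h x), Finset.sum_ite_eq' univ u f, if_pos (mem_univ u)]

lemma opN_add (j : ℕ) (g g' : L ℓ j → ℝ) :
    opN ℓ j (g + g') = opN ℓ j g + opN ℓ j g' := by
  funext u
  show (∑ x : L ℓ j, (if x.1 ⊆ u.1 then g x + g' x else 0))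
    = (∑ x : L ℓ j, (if x.1 ⊆ u.1 then g x else 0)) + ∑ x : L ℓ j, (if x.1 ⊆ u.1 then g' x else 0)
  rw [← Finset.sum_add_distrib]
  apply Finset.sum_congr rfl
  intro x _
  by_cases h : x.1 ⊆ u.1 <;> simp [h]

lemma opN_smul (j : ℕ) (c : ℝ) (g : L ℓ j → ℝ) :
    opN ℓ j (c • g) = c • opN ℓ j g := by
  funext u
  show (∑ x : L ℓ j, (if x.1 ⊆ u.1 then c * g x else 0)) = c * ∑ x : L ℓ j, _
  rw [Finset.mul_sum]
  apply Finset.sum_congr rfl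
  intro x _
  by_cases h : x.1 ⊆ u.1 <;> simp [h]

lemma opA_add (f g : Vt ℓ → ℝ) : opA ℓ (f + g) = opA ℓ f + opA ℓ g := by
  funext u
  show (∑ v : Vt ℓ, (if Disjoint u.1 v.1 then f v + g v else 0))
    = (∑ v : Vt ℓ, (if Disjoint u.1 v.1 then f v else 0)) + ∑ v : Vt ℓ, (if Disjoint u.1 v.1 then g v else 0)
  rw [← Finset.sum_add_distrib]
  apply Finset.sum_congr rfl
  intro v _
  by_cases h : Disjoint u.1 v.1 <;> simp [h]

lemma opA_smul (c : ℝ) (f : Vt ℓ → ℝ) : opA ℓ (c • f) = c • opA ℓ f := by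
  funext u
  show (∑ v : Vt ℓ, (if Disjoint u.1 v.1 then c * f v else 0)) = c * ∑ v : Vt ℓ, _
  rw [Finset.mul_sum]
  apply Finset.sum_congr rfl
  intro v _
  by_cases h : Disjoint u.1 v.1 <;> simp [h]

lemma opA_sub (f g : Vt ℓ → ℝ) : opA ℓ (f - g) = opA ℓ f - opA ℓ g := by
  have h : f - g = f + (-1 : ℝ) • g := by funext u; simp; ring
  rw [h, opA_add, opA_smul]
  funext u
  simp
  ring

lemma opA_finsum (m : ℕ) (w : ℕ → Vt ℓ → ℝ) :
    opA ℓ (∑ i ∈ range m, w i) = ∑ i ∈ range m, opA ℓ (w i) := by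
  induction m with
  | zero => simp only [range_zero, Finset.sum_empty]; funext u
            show (∑ v : Vt ℓ, (if Disjoint u.1 v.1 then (0:ℝ) else 0)) = 0
            simp
  | succ m ih => rw [Finset.sum_range_succ, Finset.sum_range_succ, opA_add, ih]

/-- membership in the level-`j` subspace. -/
def InV (j : ℕ) (f : Vt ℓ → ℝ) : Prop := ∃ g : L ℓ j → ℝ, f = opN ℓ j g

lemma InV_add {j : ℕ} {f f' : Vt ℓ → ℝ} (h : InV ℓ j f) (h' : InV ℓ j f') :
    InV ℓ j (f + f') := by
  obtain ⟨g, rfl⟩ := h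
  obtain ⟨g', rfl⟩ := h'
  exact ⟨g + g', (opN_add ℓ j g g').symm⟩

lemma InV_smul {j : ℕ} (c : ℝ) {f : Vt ℓ → ℝ} (h : InV ℓ j f) :
    InV ℓ j (c • f) := by
  obtain ⟨g, rfl⟩ := h
  exact ⟨c • g, (opN_smul ℓ j c g).symm⟩

lemma InV_zero (j : ℕ) : InV ℓ j 0 := by
  refine ⟨0, ?_⟩
  funext u
  show (0:ℝ) = ∑ x : L ℓ j, (if x.1 ⊆ u.1 then (0:ℝ) else 0)
  simp

lemma InV_mono (hℓ : 2 < ℓ) {i j : ℕ} (hij : i ≤ j) (hj : j ≤ ℓ - 1) {f : Vt ℓ → ℝ}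
    (h : InV ℓ i f) : InV ℓ j f := by
  induction j with
  | zero => 
    have : i = 0 := Nat.le_zero.1 hij
    rwa [← this]
  | succ j ih =>
    rcases Nat.lt_or_ge i (j+1) with hlt | hge
    · have hi_le : i ≤ j := by omega
      have hj' : j ≤ ℓ - 1 := by omega
      obtain ⟨g, rfl⟩ := ih hi_le hj'
      refine ⟨((ℓ - 1 - j : ℕ) : ℝ)⁻¹ • opU ℓ j g, ?_⟩
      rw [opN_smul, N_comp_U ℓ hℓ j hj]
      funext u
      show opN ℓ j g u = ((ℓ - 1 - j:ℕ):ℝ)⁻¹ * (((ℓ - 1 - j :ℕ):ℝ) * opN ℓ j g u)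
      have hne : ((ℓ - 1 - j : ℕ) : ℝ) ≠ 0 := by
        have : ℓ - 1 - j ≠ 0 := by omega
        exact_mod_cast this
      rw [← mul_assoc, inv_mul_cancel₀ hne, one_mul]
    · have : i = j + 1 := by omega
      rwa [← this]

noncomputable def lam (ℓ i : ℕ) : ℝ := (-1)^i * ((ℓ:ℝ) - i)

/-- pointwise eigenvector property. -/
def IsEig (c : ℝ) (w : Vt ℓ → ℝ) : Prop := ∀ u, opA ℓ w u = c * w u

lemma lam_abs (i : ℕ) (hi : i ≤ ℓ - 1) (hℓ : 2 < ℓ) : |lam ℓ i| = (ℓ:ℝ) - i := by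
  have hpos : (0:ℝ) < (ℓ:ℝ) - i := by
    have : (i:ℝ) < (ℓ:ℝ) := by exact_mod_cast (by omega : i < ℓ)
    linarith
  rw [lam, abs_mul, abs_pow, abs_neg, abs_one, one_pow, one_mul, abs_of_pos hpos]

lemma lam_inj (i j : ℕ) (hi : i ≤ ℓ - 1) (hj : j ≤ ℓ - 1) (hℓ : 2 < ℓ) (hne : i ≠ j) :
    lam ℓ i ≠ lam ℓ j := by
  intro h
  have habs : ((ℓ:ℝ) - i) = ((ℓ:ℝ) - j) := by
    rw [← lam_abs ℓ i hi hℓ, ← lam_abs ℓ j hj hℓ, h]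
  have : (i:ℝ) = (j:ℝ) := by linarith
  exact hne (by exact_mod_cast this)

lemma opA_psmul (c : ℝ) (w : Vt ℓ → ℝ) (u : Vt ℓ) :
    opA ℓ (fun v => c * w v) u = c * opA ℓ w u := by
  have := congrFun (opA_smul ℓ c w) u
  exact this

lemma opA_psum (m : ℕ) (F : ℕ → Vt ℓ → ℝ) (u : Vt ℓ) :
    opA ℓ (fun v => ∑ i ∈ range m, F i v) u = ∑ i ∈ range m, opA ℓ (F i) u := by
  have h : (fun v => ∑ i ∈ range m, F i v) = ∑ i ∈ range m, F i := by
    funext v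
    rw [Finset.sum_apply]
  rw [h, opA_finsum]
  rw [Finset.sum_apply]

/-- key structural identity : `A(N_j g) = λ_j N_j g + tail` with `tail` in lower levels. -/
lemma A_N_structure (hℓ : 2 < ℓ) (j : ℕ) (hj : j ≤ ℓ - 1) (g : L ℓ j → ℝ) :
    ∀ u, opA ℓ (opN ℓ j g) u = lam ℓ j * opN ℓ j g u
      + ((ℓ - j : ℕ) : ℝ) * (∑ i ∈ range j, ((-1:ℝ))^i * opN ℓ i (opD ℓ i j g) u) := by
  intro u
  rw [congrFun (A_comp_N ℓ hℓ j hj g) u]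
  rw [congrFun (M_eq_sum_N_D ℓ j hj g) u]
  rw [Finset.sum_range_succ, D_self]
  have hcast : ((ℓ - j : ℕ) : ℝ) = (ℓ:ℝ) - j := by
    have : j ≤ ℓ := by omega
    exact Nat.cast_sub this
  rw [mul_add, hcast, lam]
  ring

lemma tail_InV (hℓ : 2 < ℓ) (j : ℕ) (hj1 : 1 ≤ j) (hj : j ≤ ℓ - 1) (g : L ℓ j → ℝ) :
    InV ℓ (j-1) (fun u => ((ℓ - j : ℕ) : ℝ) *
      (∑ i ∈ range j, ((-1:ℝ))^i * opN ℓ i (opD ℓ i j g) u)) := by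
  have hsum : InV ℓ (j-1) (fun u => ∑ i ∈ range j, ((-1:ℝ))^i * opN ℓ i (opD ℓ i j g) u) := by
    have hgen : ∀ m, m ≤ j → InV ℓ (j-1)
        (fun u => ∑ i ∈ range m, ((-1:ℝ))^i * opN ℓ i (opD ℓ i j g) u) := by
      intro m
      induction m with
      | zero =>
        intro _
        have h0 := InV_zero ℓ (j-1)
        rw [show (fun u => ∑ i ∈ range 0, ((-1:ℝ))^i * opN ℓ i (opD ℓ i j g) u) = (0 : Vt ℓ → ℝ) by funext u; simp]
        exact h0
      | succ m ih =>
        intro hm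
        have h1 := ih (by omega)
        have h2 : InV ℓ (j-1) (fun u => ((-1:ℝ))^m * opN ℓ m (opD ℓ m j g) u) := by
          have hm' : InV ℓ m (opN ℓ m (opD ℓ m j g)) := ⟨_, rfl⟩
          exact InV_smul ℓ (((-1:ℝ))^m) (InV_mono ℓ hℓ (by omega : m ≤ j - 1) (by omega) hm')
        have h3 := InV_add ℓ h1 h2
        have he : (fun u => ∑ i ∈ range (m+1), ((-1:ℝ))^i * opN ℓ i (opD ℓ i j g) u)
            = (fun u => ∑ i ∈ range m, ((-1:ℝ))^i * opN ℓ i (opD ℓ i j g) u)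
              + (fun u => ((-1:ℝ))^m * opN ℓ m (opD ℓ m j g) u) := by
          funext u
          rw [Pi.add_apply, Finset.sum_range_succ]
        rw [he]
        exact h3
    exact hgen j le_rfl
  exact InV_smul ℓ ((ℓ - j:ℕ):ℝ) hsum

lemma IsEig_psmul (c d : ℝ) (w : Vt ℓ → ℝ) (h : IsEig ℓ c w) :
    IsEig ℓ c (fun u => d * w u) := by
  intro u
  rw [opA_psmul, h u]
  ring

/-- full decomposition of `N_j g` into eigenvectors. -/
lemma decomp_level (hℓ : 2 < ℓ) :
    ∀ j, j ≤ ℓ - 1 → ∀ g : L ℓ j → ℝ, ∃ w : ℕ → Vt ℓ → ℝ,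
      (∀ i, i ≤ j → IsEig ℓ (lam ℓ i) (w i)) ∧
      (∀ u, opN ℓ j g u = ∑ i ∈ range (j+1), w i u) := by
  intro j
  induction j using Nat.strong_induction_on with
  | _ j ih =>
    intro hj g
    rcases Nat.eq_zero_or_pos j with hj0 | hj1
    · subst hj0
      refine ⟨fun i => if i = 0 then opN ℓ 0 g else 0, ?_, ?_⟩
      · intro i hi
        have : i = 0 := by omega
        subst this
        simp only [if_pos rfl]
        intro u
        have := A_N_structure ℓ hℓ 0 (by omega) g u
        simpa [lam] using this
      · intro u
        simp
    · -- j ≥ 1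
      have hstr := A_N_structure ℓ hℓ j hj g
      obtain ⟨g', hg'⟩ := tail_InV ℓ hℓ j hj1 hj g
      obtain ⟨w', hw'eig, hw'sum⟩ := ih (j-1) (by omega) (by omega) g'
      set c : ℕ → ℝ := fun i => (lam ℓ i - lam ℓ j)⁻¹ with hc
      refine ⟨fun i => if i < j then (fun u => c i * w' i u)
        else if i = j then (fun u => opN ℓ j g u - ∑ i' ∈ range j, c i' * w' i' u)
        else 0, ?_, ?_⟩
      · intro i hi
        rcases Nat.lt_or_ge i j with hlt | hge
        · simp only [if_pos hlt]
          exact IsEig_psmul ℓ (lam ℓ i) (c i) (w' i) (hw'eig i (by omega))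
        · have hieq : i = j := by omega
          subst hieq
          beta_reduce
          rw [if_neg (lt_irrefl i), if_pos rfl]
          intro u
          -- A(N_j g - Σ c_i w'_i) = λ_j (N_j g - Σ c_i w'_i)
          have hA : opA ℓ (fun v => opN ℓ i g v - ∑ i' ∈ range i, c i' * w' i' v) u
              = opA ℓ (opN ℓ i g) u - ∑ i' ∈ range i, c i' * opA ℓ (w' i') u := by
            have hsplit : (fun v => opN ℓ i g v - ∑ i' ∈ range i, c i' * w' i' v)
                = (opN ℓ i g) - (fun v => ∑ i' ∈ range i, c i' * w' i' v) := by
              funext v; rfl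
            rw [hsplit, opA_sub]
            show opA ℓ (opN ℓ i g) u - opA ℓ _ u = _
            congr 1
            rw [opA_psum ℓ i (fun i' => fun v => c i' * w' i' v) u]
            apply Finset.sum_congr rfl
            intro i' _
            exact opA_psmul ℓ (c i') (w' i') u
          rw [hA, hstr u]
          -- tail = opN (j-1) g' = Σ_{i' < j} w' i'
          have htail : ((ℓ - i : ℕ) : ℝ) * (∑ i' ∈ range i, ((-1:ℝ))^i' * opN ℓ i' (opD ℓ i' i g) u)
              = ∑ i' ∈ range i, w' i' u := by
            have h1 : ((ℓ - i : ℕ) : ℝ) * (∑ i' ∈ range i, ((-1:ℝ))^i' * opN ℓ i' (opD ℓ i' i g) u)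
                = opN ℓ (i-1) g' u := congrFun hg' u
            have h2 := hw'sum u
            rw [show i - 1 + 1 = i by omega] at h2
            exact h1.trans h2
          rw [htail]
          have heig : ∀ i' ∈ range i, c i' * opA ℓ (w' i') u = c i' * (lam ℓ i' * w' i' u) := by
            intro i' hi'
            rw [Finset.mem_range] at hi'
            rw [hw'eig i' (by omega) u]
          rw [Finset.sum_congr rfl heig]
          have hkey : ∀ i' ∈ range i, w' i' u - c i' * (lam ℓ i' * w' i' u)
              = -(lam ℓ i) * (c i' * w' i' u) := by
            intro i' hi'
            rw [Finset.mem_range] at hi'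
            have hne : lam ℓ i' - lam ℓ i ≠ 0 := by
              have := lam_inj ℓ i' i (by omega) (by omega) hℓ (by omega)
              exact sub_ne_zero.2 this
            rw [hc]
            field_simp
            ring
          have hsum2 : ∑ i' ∈ range i, w' i' u - ∑ i' ∈ range i, c i' * (lam ℓ i' * w' i' u)
              = -(lam ℓ i) * ∑ i' ∈ range i, c i' * w' i' u := by
            rw [← Finset.sum_sub_distrib, Finset.mul_sum]
            exact Finset.sum_congr rfl hkey
          linear_combination hsum2
      · intro u
        rw [Finset.sum_range_succ]
        beta_reduce
        rw [if_neg (lt_irrefl j), if_pos rfl]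
        have : ∀ i ∈ range j, (if i < j then (fun u => c i * w' i u)
            else if i = j then (fun u => opN ℓ j g u - ∑ i' ∈ range j, c i' * w' i' u)
            else 0) u = c i * w' i u := by
          intro i hi
          rw [Finset.mem_range] at hi
          simp only [if_pos hi]
        rw [Finset.sum_congr rfl this]
        ring

/-- decomposition of an arbitrary vector into eigenvectors. -/
lemma decomp_all (hℓ : 2 < ℓ) (f : Vt ℓ → ℝ) :
    ∃ w : ℕ → Vt ℓ → ℝ, (∀ i, i ≤ ℓ - 1 → IsEig ℓ (lam ℓ i) (w i)) ∧
      (∀ u, f u = ∑ i ∈ range ℓ, w i u) := by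
  obtain ⟨w, he, hs⟩ := decomp_level ℓ hℓ (ℓ-1) le_rfl (f : L ℓ (ℓ-1) → ℝ)
  refine ⟨w, he, ?_⟩
  intro u
  have h1 := hs u
  rw [congrFun (N_top ℓ f) u] at h1
  rw [show ℓ - 1 + 1 = ℓ by omega] at h1
  exact h1

lemma opA_symm_ip (f g : Vt ℓ → ℝ) : ip ℓ (opA ℓ f) g = ip ℓ f (opA ℓ g) := by
  show (∑ u : Vt ℓ, (∑ v : Vt ℓ, (if Disjoint u.1 v.1 then f v else 0)) * g u)
    = ∑ u : Vt ℓ, f u * (∑ v : Vt ℓ, (if Disjoint u.1 v.1 then g v else 0))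
  have lhs_eq : ∀ u : Vt ℓ, (∑ v : Vt ℓ, (if Disjoint u.1 v.1 then f v else 0)) * g u
      = ∑ v : Vt ℓ, (if Disjoint u.1 v.1 then f v * g u else 0) := by
    intro u
    rw [Finset.sum_mul]
    apply Finset.sum_congr rfl
    intro v _
    rw [ite_mul, zero_mul]
  have rhs_eq : ∀ u : Vt ℓ, f u * (∑ v : Vt ℓ, (if Disjoint u.1 v.1 then g v else 0))
      = ∑ v : Vt ℓ, (if Disjoint u.1 v.1 then f u * g v else 0) := by
    intro u
    rw [Finset.mul_sum]
    apply Finset.sum_congr rfl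
    intro v _
    rw [mul_ite, mul_zero]
  rw [Finset.sum_congr rfl (fun u _ => lhs_eq u), Finset.sum_congr rfl (fun u _ => rhs_eq u)]
  rw [Finset.sum_comm]
  apply Finset.sum_congr rfl
  intro v _
  apply Finset.sum_congr rfl
  intro u _
  have : Disjoint u.1 v.1 ↔ Disjoint v.1 u.1 := ⟨fun h => h.symm, fun h => h.symm⟩
  by_cases h : Disjoint u.1 v.1
  · rw [if_pos h, if_pos (this.1 h), mul_comm]
  · rw [if_neg h, if_neg (fun hc => h (this.2 hc))]

lemma ip_opA_eig {c : ℝ} {w : Vt ℓ → ℝ} (h : IsEig ℓ c w) (g : Vt ℓ → ℝ) :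
    ip ℓ (opA ℓ w) g = c * ip ℓ w g := by
  show (∑ u : Vt ℓ, opA ℓ w u * g u) = c * ∑ u : Vt ℓ, w u * g u
  rw [Finset.mul_sum]
  apply Finset.sum_congr rfl
  intro u _
  rw [h u]
  ring

lemma ip_comm (f g : Vt ℓ → ℝ) : ip ℓ f g = ip ℓ g f := by
  show (∑ u : Vt ℓ, f u * g u) = ∑ u : Vt ℓ, g u * f u
  apply Finset.sum_congr rfl
  intro u _
  ring

lemma eig_orth {c c' : ℝ} {w w' : Vt ℓ → ℝ} (h : IsEig ℓ c w) (h' : IsEig ℓ c' w')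
    (hne : c ≠ c') : ip ℓ w w' = 0 := by
  have h1 : ip ℓ (opA ℓ w) w' = c * ip ℓ w w' := ip_opA_eig ℓ h w'
  have h2 : ip ℓ (opA ℓ w) w' = c' * ip ℓ w w' := by
    rw [opA_symm_ip, ip_comm, ip_opA_eig ℓ h' w, ip_comm]
  have h3 : (c - c') * ip ℓ w w' = 0 := by
    rw [sub_mul, ← h1, ← h2]
    ring
  rcases mul_eq_zero.1 h3 with h4 | h4
  · exact absurd (sub_eq_zero.1 h4) hne
  · exact h4

lemma ip_self_nonneg (w : Vt ℓ → ℝ) : 0 ≤ ip ℓ w w := by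
  apply Finset.sum_nonneg
  intro u _
  exact mul_self_nonneg (w u)

/-- the cubic polynomial operator. -/
noncomputable def qOp (q₂ q₁ q₀ : ℝ) (f : Vt ℓ → ℝ) : Vt ℓ → ℝ :=
  fun u => opA ℓ (opA ℓ (opA ℓ f)) u + q₂ * opA ℓ (opA ℓ f) u + q₁ * opA ℓ f u + q₀ * f u

noncomputable def qval (q₂ q₁ q₀ x : ℝ) : ℝ := x^3 + q₂*x^2 + q₁*x + q₀

lemma qOp_eig {c : ℝ} {w : Vt ℓ → ℝ} (q₂ q₁ q₀ : ℝ) (h : IsEig ℓ c w) :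
    ∀ u, qOp ℓ q₂ q₁ q₀ w u = qval q₂ q₁ q₀ c * w u := by
  intro u
  have hw : opA ℓ w = fun v => c * w v := funext (fun v => h v)
  have h2 : ∀ v, opA ℓ (opA ℓ w) v = c^2 * w v := by
    intro v
    rw [hw, opA_psmul, h v]
    ring
  have hw2 : opA ℓ (opA ℓ w) = fun v => c^2 * w v := funext h2
  have h3 : ∀ v, opA ℓ (opA ℓ (opA ℓ w)) v = c^3 * w v := by
    intro v
    rw [hw2, opA_psmul, h v]
    ring
  show opA ℓ (opA ℓ (opA ℓ w)) u + q₂ * opA ℓ (opA ℓ w) u + q₁ * opA ℓ w u + q₀ * w u = _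
  rw [h3 u, h2 u, h u, qval]
  ring

/-- positivity of the quadratic form, given nonnegativity on the spectrum. -/
lemma qform_nonneg (hℓ : 2 < ℓ) (q₂ q₁ q₀ : ℝ)
    (hq : ∀ i, i ≤ ℓ - 1 → 0 ≤ qval q₂ q₁ q₀ (lam ℓ i)) (y : Vt ℓ → ℝ) :
    0 ≤ ip ℓ y (qOp ℓ q₂ q₁ q₀ y) := by
  obtain ⟨w, heig, hsum⟩ := decomp_all ℓ hℓ y
  -- qOp y u = ∑ i, qval (lam i) * w i u
  have hy : y = fun u => ∑ i ∈ range ℓ, w i u := funext hsum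
  have hA1 : ∀ u, opA ℓ y u = ∑ i ∈ range ℓ, lam ℓ i * w i u := by
    intro u
    rw [hy, opA_psum]
    apply Finset.sum_congr rfl
    intro i hi
    rw [Finset.mem_range] at hi
    exact heig i (by omega) u
  have hA2 : ∀ u, opA ℓ (opA ℓ y) u = ∑ i ∈ range ℓ, (lam ℓ i)^2 * w i u := by
    intro u
    rw [funext hA1, opA_psum]
    apply Finset.sum_congr rfl
    intro i hi
    rw [Finset.mem_range] at hi
    rw [opA_psmul, heig i (by omega) u]
    ring
  have hA3 : ∀ u, opA ℓ (opA ℓ (opA ℓ y)) u = ∑ i ∈ range ℓ, (lam ℓ i)^3 * w i u := by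
    intro u
    rw [funext hA2, opA_psum]
    apply Finset.sum_congr rfl
    intro i hi
    rw [Finset.mem_range] at hi
    rw [opA_psmul, heig i (by omega) u]
    ring
  have hQ : ∀ u, qOp ℓ q₂ q₁ q₀ y u = ∑ i ∈ range ℓ, qval q₂ q₁ q₀ (lam ℓ i) * w i u := by
    intro u
    show opA ℓ (opA ℓ (opA ℓ y)) u + q₂ * opA ℓ (opA ℓ y) u + q₁ * opA ℓ y u + q₀ * y u = _
    rw [hA3 u, hA2 u, hA1 u, hsum u, Finset.mul_sum, Finset.mul_sum, Finset.mul_sum,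
      ← Finset.sum_add_distrib, ← Finset.sum_add_distrib, ← Finset.sum_add_distrib]
    apply Finset.sum_congr rfl
    intro i _
    rw [qval]
    ring
  have hexpand : ip ℓ y (qOp ℓ q₂ q₁ q₀ y)
      = ∑ i ∈ range ℓ, ∑ j ∈ range ℓ, qval q₂ q₁ q₀ (lam ℓ j) * ip ℓ (w i) (w j) := by
    show (∑ u : Vt ℓ, y u * qOp ℓ q₂ q₁ q₀ y u) = _
    have hterm : ∀ u : Vt ℓ, y u * qOp ℓ q₂ q₁ q₀ y u
        = ∑ i ∈ range ℓ, ∑ j ∈ range ℓ, qval q₂ q₁ q₀ (lam ℓ j) * (w i u * w j u) := by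
      intro u
      rw [hsum u, hQ u, Finset.sum_mul_sum]
      apply Finset.sum_congr rfl
      intro i _
      apply Finset.sum_congr rfl
      intro j _
      ring
    rw [Finset.sum_congr rfl (fun u _ => hterm u)]
    rw [Finset.sum_comm]
    apply Finset.sum_congr rfl
    intro i _
    rw [Finset.sum_comm]
    apply Finset.sum_congr rfl
    intro j _
    show (∑ u : Vt ℓ, qval q₂ q₁ q₀ (lam ℓ j) * (w i u * w j u)) = _
    rw [ip, Finset.mul_sum]
  rw [hexpand]
  apply Finset.sum_nonneg
  intro i hi
  rw [Finset.mem_range] at hi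
  have hdiag : (∑ j ∈ range ℓ, qval q₂ q₁ q₀ (lam ℓ j) * ip ℓ (w i) (w j))
      = qval q₂ q₁ q₀ (lam ℓ i) * ip ℓ (w i) (w i) := by
    apply Finset.sum_eq_single i
    · intro j hj hne
      rw [Finset.mem_range] at hj
      have horth : ip ℓ (w i) (w j) = 0 := by
        apply eig_orth ℓ (heig i (by omega)) (heig j (by omega))
        exact lam_inj ℓ i j (by omega) (by omega) hℓ (by omega)
      rw [horth, mul_zero]
    · intro habs
      exact absurd (Finset.mem_range.2 hi) habs
  rw [hdiag]
  exact mul_nonneg (hq i (by omega)) (ip_self_nonneg ℓ (w i))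

/-- 0/1 adjacency kernel. -/
noncomputable def e1 (u v : Vt ℓ) : ℝ := if Disjoint u.1 v.1 then 1 else 0

noncomputable def ind (S : Finset (Vt ℓ)) : Vt ℓ → ℝ := fun u => if u ∈ S then 1 else 0

lemma count_disj (hℓ : 2 < ℓ) (u : Vt ℓ) :
    (∑ v : Vt ℓ, (if Disjoint u.1 v.1 then (1:ℝ) else 0)) = (ℓ:ℝ) := by
  rw [sum_ite_count]
  have hfil : (univ.filter (fun v : Vt ℓ => Disjoint u.1 v.1))
      = (univ.filter (fun v : Vt ℓ => ∅ ⊆ v.1 ∧ v.1 ⊆ u.1ᶜ)) := by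
    apply Finset.filter_congr
    intro v _
    constructor
    · intro h
      exact ⟨Finset.empty_subset _, (disj_iff_subset_compl v.1 u.1).1 h.symm⟩
    · intro h
      exact ((disj_iff_subset_compl v.1 u.1).2 h.2).symm
  rw [hfil, card_between (ℓ-1) ∅ u.1ᶜ (Finset.empty_subset _) (by simp), compl_card hℓ u]
  simp only [Finset.card_empty, Nat.sub_zero]
  have h1 : ℓ - (ℓ-1) = 1 := by omega
  rw [← Nat.choose_symm (by omega : ℓ - 1 ≤ ℓ), h1, Nat.choose_one_right, mul_one]

lemma opA_one (hℓ : 2 < ℓ) : IsEig ℓ (ℓ:ℝ) (fun _ => (1:ℝ)) := by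
  intro u
  show (∑ v : Vt ℓ, (if Disjoint u.1 v.1 then (1:ℝ) else 0)) = (ℓ:ℝ) * 1
  rw [count_disj ℓ hℓ u, mul_one]

lemma sum_opA (hℓ : 2 < ℓ) (f : Vt ℓ → ℝ) :
    (∑ u : Vt ℓ, opA ℓ f u) = (ℓ:ℝ) * ∑ u : Vt ℓ, f u := by
  show (∑ u : Vt ℓ, ∑ v : Vt ℓ, (if Disjoint u.1 v.1 then f v else 0)) = _
  rw [Finset.sum_comm, Finset.mul_sum]
  apply Finset.sum_congr rfl
  intro v _
  have h1 : ∀ u : Vt ℓ, (if Disjoint u.1 v.1 then f v else 0)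
      = (if Disjoint v.1 u.1 then (1:ℝ) else 0) * f v := by
    intro u
    by_cases h : Disjoint u.1 v.1
    · rw [if_pos h, if_pos h.symm, one_mul]
    · rw [if_neg h, if_neg (fun hc => h hc.symm), zero_mul]
  rw [Finset.sum_congr rfl (fun u _ => h1 u), ← Finset.sum_mul, count_disj ℓ hℓ v]

section pairs

variable {ℓ : ℕ}

lemma e1_zero {u v : Vt ℓ} (h : 1 ≤ (u.1 ∩ v.1).card) : e1 ℓ u v = 0 := by
  rw [e1, if_neg]
  intro hd
  rw [Finset.disjoint_iff_inter_eq_empty] at hd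
  rw [hd] at h
  simp at h

lemma walk2_off (hℓ : 2 < ℓ) {u v : Vt ℓ} (hcard : (u.1 ∩ v.1).card + 3 ≤ ℓ) :
    (∑ w : Vt ℓ, e1 ℓ u w * e1 ℓ w v) = 0 := by
  apply Finset.sum_eq_zero
  intro w _
  by_cases h1 : Disjoint u.1 w.1
  · by_cases h2 : Disjoint w.1 v.1
    · exfalso
      have hsub : w.1 ⊆ (u.1 ∪ v.1)ᶜ := by
        intro a ha
        rw [Finset.mem_compl, Finset.mem_union]
        rintro (hau | hav)
        · exact (Finset.disjoint_left.1 h1) hau ha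
        · exact (Finset.disjoint_left.1 h2) ha hav
      have hle := Finset.card_le_card hsub
      rw [Finset.card_compl, w.2] at hle
      have huni := Finset.card_union_add_card_inter u.1 v.1
      rw [u.2, v.2] at huni
      simp only [Fintype.card_fin] at hle
      omega
    · simp [e1, h2]
  · simp [e1, h1]

lemma walk2_diag (hℓ : 2 < ℓ) (u : Vt ℓ) :
    (∑ w : Vt ℓ, e1 ℓ u w * e1 ℓ w u) = (ℓ:ℝ) := by
  have h1 : ∀ w : Vt ℓ, e1 ℓ u w * e1 ℓ w u = (if Disjoint u.1 w.1 then (1:ℝ) else 0) := by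
    intro w
    by_cases h : Disjoint u.1 w.1
    · have h' : Disjoint w.1 u.1 := h.symm
      simp [e1, h, h']
    · have h' : ¬ Disjoint w.1 u.1 := fun hc => h hc.symm
      simp [e1, h, h']
  rw [Finset.sum_congr rfl (fun w _ => h1 w), count_disj ℓ hℓ u]

lemma walk3_zero (hℓ : 2 < ℓ) {u v : Vt ℓ} (h2 : 2 ≤ (u.1 ∩ v.1).card) :
    (∑ w : Vt ℓ, ∑ z : Vt ℓ, e1 ℓ u w * e1 ℓ w z * e1 ℓ z v) = 0 := by
  apply Finset.sum_eq_zero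
  intro w _
  apply Finset.sum_eq_zero
  intro z _
  by_cases hA : Disjoint u.1 w.1
  · by_cases hB : Disjoint w.1 z.1
    · by_cases hC : Disjoint z.1 v.1
      · exfalso
        have hsub : u.1 ∩ v.1 ⊆ (w.1 ∪ z.1)ᶜ := by
          intro a ha
          rw [Finset.mem_inter] at ha
          rw [Finset.mem_compl, Finset.mem_union]
          rintro (haw | haz)
          · exact (Finset.disjoint_left.1 hA) ha.1 haw
          · exact (Finset.disjoint_left.1 hC) haz ha.2
        have hle := Finset.card_le_card hsub
        rw [Finset.card_compl] at hle
        have huni := Finset.card_union_add_card_inter w.1 z.1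
        rw [w.2, z.2, Finset.disjoint_iff_inter_eq_empty.1 hB] at huni
        simp only [Finset.card_empty, Fintype.card_fin] at hle huni
        omega
      · simp [e1, hC]
    · simp [e1, hB]
  · simp [e1, hA]

end pairs

/-- value of the quadratic form at an indicator of a "good" set. -/
lemma ip_count (hℓ : 2 < ℓ) (q₂ q₁ q₀ : ℝ) (S : Finset (Vt ℓ))
    (hp : ∀ u ∈ S, ∀ v ∈ S, u ≠ v → 2 ≤ (u.1 ∩ v.1).card ∧ (u.1 ∩ v.1).card + 3 ≤ ℓ) :
    ip ℓ (ind ℓ S) (qOp ℓ q₂ q₁ q₀ (ind ℓ S)) = (q₂ * (ℓ:ℝ) + q₀) * S.card := by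
  set χ := ind ℓ S with hχ
  -- inner sums over the indicator
  have hA1 : ∀ u : Vt ℓ, opA ℓ χ u = ∑ v ∈ S, e1 ℓ u v := by
    intro u
    show (∑ v : Vt ℓ, (if Disjoint u.1 v.1 then χ v else 0)) = _
    have h1 : ∀ v : Vt ℓ, (if Disjoint u.1 v.1 then χ v else 0)
        = (if v ∈ S then e1 ℓ u v else 0) := by
      intro v
      rw [hχ, ind, e1]
      by_cases hd : Disjoint u.1 v.1 <;> by_cases hv : v ∈ S <;> simp [hd, hv]
    rw [Finset.sum_congr rfl (fun v _ => h1 v), Finset.sum_ite_mem, Finset.univ_inter]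
  have hA2 : ∀ u : Vt ℓ, opA ℓ (opA ℓ χ) u = ∑ v ∈ S, ∑ w : Vt ℓ, e1 ℓ u w * e1 ℓ w v := by
    intro u
    show (∑ w : Vt ℓ, (if Disjoint u.1 w.1 then opA ℓ χ w else 0)) = _
    have h1 : ∀ w : Vt ℓ, (if Disjoint u.1 w.1 then opA ℓ χ w else 0)
        = ∑ v ∈ S, e1 ℓ u w * e1 ℓ w v := by
      intro w
      rw [hA1 w]
      by_cases hd : Disjoint u.1 w.1
      · rw [if_pos hd]
        apply Finset.sum_congr rfl
        intro v _
        simp [e1, hd]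
      · rw [if_neg hd, eq_comm]
        apply Finset.sum_eq_zero
        intro v _
        simp [e1, hd]
    rw [Finset.sum_congr rfl (fun w _ => h1 w), Finset.sum_comm]
  have hA3 : ∀ u : Vt ℓ, opA ℓ (opA ℓ (opA ℓ χ)) u
      = ∑ v ∈ S, ∑ w : Vt ℓ, ∑ z : Vt ℓ, e1 ℓ u w * e1 ℓ w z * e1 ℓ z v := by
    intro u
    show (∑ w : Vt ℓ, (if Disjoint u.1 w.1 then opA ℓ (opA ℓ χ) w else 0)) = _
    have h1 : ∀ w : Vt ℓ, (if Disjoint u.1 w.1 then opA ℓ (opA ℓ χ) w else 0)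
        = ∑ v ∈ S, ∑ z : Vt ℓ, e1 ℓ u w * e1 ℓ w z * e1 ℓ z v := by
      intro w
      rw [hA2 w]
      by_cases hd : Disjoint u.1 w.1
      · rw [if_pos hd]
        apply Finset.sum_congr rfl
        intro v _
        apply Finset.sum_congr rfl
        intro z _
        simp [e1, hd]
      · rw [if_neg hd, eq_comm]
        apply Finset.sum_eq_zero
        intro v _
        apply Finset.sum_eq_zero
        intro z _
        simp [e1, hd]
    rw [Finset.sum_congr rfl (fun w _ => h1 w), Finset.sum_comm]
  -- reduce outer sum over χ
  have hsum_ind : ∀ f : Vt ℓ → ℝ, (∑ u : Vt ℓ, χ u * f u) = ∑ u ∈ S, f u := by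
    intro f
    have h1 : ∀ u : Vt ℓ, χ u * f u = (if u ∈ S then f u else 0) := by
      intro u
      rw [hχ, ind]
      by_cases hu : u ∈ S <;> simp [hu]
    rw [Finset.sum_congr rfl (fun u _ => h1 u), Finset.sum_ite_mem, Finset.univ_inter]
  show (∑ u : Vt ℓ, χ u * (opA ℓ (opA ℓ (opA ℓ χ)) u + q₂ * opA ℓ (opA ℓ χ) u
      + q₁ * opA ℓ χ u + q₀ * χ u)) = _
  have hsplit : ∀ u : Vt ℓ, χ u * (opA ℓ (opA ℓ (opA ℓ χ)) u + q₂ * opA ℓ (opA ℓ χ) u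
      + q₁ * opA ℓ χ u + q₀ * χ u)
      = χ u * opA ℓ (opA ℓ (opA ℓ χ)) u + q₂ * (χ u * opA ℓ (opA ℓ χ) u)
        + q₁ * (χ u * opA ℓ χ u) + q₀ * (χ u * χ u) := by
    intro u
    ring
  rw [Finset.sum_congr rfl (fun u _ => hsplit u)]
  rw [Finset.sum_add_distrib, Finset.sum_add_distrib, Finset.sum_add_distrib,
    ← Finset.mul_sum, ← Finset.mul_sum, ← Finset.mul_sum]
  -- the four terms
  have hT0 : (∑ u : Vt ℓ, χ u * χ u) = (S.card : ℝ) := by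
    have h1 : ∀ u : Vt ℓ, χ u * χ u = (if u ∈ S then (1:ℝ) else 0) := by
      intro u
      rw [hχ, ind]
      by_cases hu : u ∈ S <;> simp [hu]
    rw [Finset.sum_congr rfl (fun u _ => h1 u), Finset.sum_boole, Finset.filter_mem_eq_inter,
      Finset.univ_inter]
  have hT1 : (∑ u : Vt ℓ, χ u * opA ℓ χ u) = 0 := by
    rw [hsum_ind]
    apply Finset.sum_eq_zero
    intro u hu
    rw [hA1 u]
    apply Finset.sum_eq_zero
    intro v hv
    rcases eq_or_ne u v with rfl | hne
    · apply e1_zero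
      have : (u.1 ∩ u.1).card = ℓ - 1 := by rw [Finset.inter_self, u.2]
      omega
    · apply e1_zero
      have := (hp u hu v hv hne).1
      omega
  have hT2 : (∑ u : Vt ℓ, χ u * opA ℓ (opA ℓ χ) u) = (ℓ:ℝ) * S.card := by
    rw [hsum_ind]
    have h1 : ∀ u ∈ S, (∑ v ∈ S, ∑ w : Vt ℓ, e1 ℓ u w * e1 ℓ w v) = (ℓ:ℝ) := by
      intro u hu
      have h2 : ∀ v ∈ S, (∑ w : Vt ℓ, e1 ℓ u w * e1 ℓ w v)
          = (if v = u then (ℓ:ℝ) else 0) := by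
        intro v hv
        rcases eq_or_ne v u with rfl | hne
        · rw [if_pos rfl]
          exact walk2_diag hℓ v
        · rw [if_neg hne]
          exact walk2_off hℓ (hp u hu v hv (fun h => hne h.symm)).2
      rw [Finset.sum_congr rfl (fun v hv => h2 v hv)]
      rw [Finset.sum_ite_eq' S u (fun _ => (ℓ:ℝ)), if_pos hu]
    calc (∑ u ∈ S, opA ℓ (opA ℓ χ) u) = ∑ u ∈ S, (ℓ:ℝ) := by
          apply Finset.sum_congr rfl
          intro u hu
          rw [hA2 u]
          exact h1 u hu
    _ = (ℓ:ℝ) * S.card := by rw [Finset.sum_const, nsmul_eq_mul, mul_comm]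
  have hT3 : (∑ u : Vt ℓ, χ u * opA ℓ (opA ℓ (opA ℓ χ)) u) = 0 := by
    rw [hsum_ind]
    apply Finset.sum_eq_zero
    intro u hu
    rw [hA3 u]
    apply Finset.sum_eq_zero
    intro v hv
    rcases eq_or_ne u v with rfl | hne
    · apply walk3_zero hℓ
      have : (u.1 ∩ u.1).card = ℓ - 1 := by rw [Finset.inter_self, u.2]
      omega
    · exact walk3_zero hℓ (hp u hu v hv hne).1
  rw [hT0, hT1, hT2, hT3]
  ring

lemma vt_nonempty (hℓ : 2 < ℓ) : Nonempty (Vt ℓ) := by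
  rw [← Fintype.card_pos_iff, Fintype.card_finset_len]
  apply Nat.choose_pos
  simp only [Fintype.card_fin]
  omega

lemma opA_padd (f g : Vt ℓ → ℝ) (u : Vt ℓ) :
    opA ℓ (fun v => f v + g v) u = opA ℓ f u + opA ℓ g u :=
  congrFun (opA_add ℓ f g) u

lemma opA_const (hℓ : 2 < ℓ) (c : ℝ) (u : Vt ℓ) :
    opA ℓ (fun _ => c) u = (ℓ:ℝ) * c := by
  have h : opA ℓ (fun _ => c) u = opA ℓ (fun v => c * (fun _ => (1:ℝ)) v) u := by
    have he : (fun _ : Vt ℓ => c) = (fun v : Vt ℓ => c * (fun _ : Vt ℓ => (1:ℝ)) v) := by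
      funext v
      ring
    rw [he]
  rw [h, opA_psmul, opA_one ℓ hℓ u]
  ring

/-- the central inequality. -/
lemma main_bound (hℓ : 2 < ℓ) (q₂ q₁ q₀ : ℝ)
    (hq : ∀ i, i ≤ ℓ - 1 → 0 ≤ qval q₂ q₁ q₀ (lam ℓ i))
    (S : Finset (Vt ℓ))
    (hp : ∀ u ∈ S, ∀ v ∈ S, u ≠ v → 2 ≤ (u.1 ∩ v.1).card ∧ (u.1 ∩ v.1).card + 3 ≤ ℓ) :
    (S.card : ℝ) * qval q₂ q₁ q₀ (ℓ:ℝ)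
      ≤ (Fintype.card (Vt ℓ) : ℝ) * (q₂ * (ℓ:ℝ) + q₀) := by
  classical
  set nR : ℝ := (Fintype.card (Vt ℓ) : ℝ) with hnR
  have hn0 : 0 < nR := by
    have := vt_nonempty ℓ hℓ
    have h1 : 0 < Fintype.card (Vt ℓ) := Fintype.card_pos
    rw [hnR]
    exact_mod_cast h1
  set s : ℝ := (S.card : ℝ) with hs
  have hs0 : 0 ≤ s := Nat.cast_nonneg _
  -- diagonal value is nonnegative
  have hW : 0 ≤ q₂ * (ℓ:ℝ) + q₀ := by
    obtain ⟨u⟩ := vt_nonempty ℓ hℓ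
    have h1 := ip_count ℓ hℓ q₂ q₁ q₀ {u} (by
      intro a ha b hb hne
      rw [Finset.mem_singleton] at ha hb
      exact absurd (ha.trans hb.symm) hne)
    have h2 := qform_nonneg ℓ hℓ q₂ q₁ q₀ hq (ind ℓ {u})
    rw [h1] at h2
    simpa using h2
  set χ : Vt ℓ → ℝ := ind ℓ S with hχ
  set y : Vt ℓ → ℝ := fun u => χ u - s / nR with hy
  have hsumχ : (∑ u : Vt ℓ, χ u) = s := by
    rw [hχ, hs]
    show (∑ u : Vt ℓ, (if u ∈ S then (1:ℝ) else 0)) = _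
    rw [Finset.sum_boole, Finset.filter_mem_eq_inter, Finset.univ_inter]
  have hsumy : (∑ u : Vt ℓ, y u) = 0 := by
    rw [hy]
    rw [Finset.sum_sub_distrib, hsumχ, Finset.sum_const, Finset.card_univ, nsmul_eq_mul]
    rw [← hnR]
    field_simp
    ring
  have hχ_eq : ∀ u, χ u = y u + s / nR := by
    intro u
    rw [hy]
    ring
  -- qOp χ = qOp y + const
  have hA1 : ∀ u, opA ℓ χ u = opA ℓ y u + (s/nR) * (ℓ:ℝ) := by
    intro u
    have h1 : χ = fun v => y v + (fun _ : Vt ℓ => s / nR) v := funext hχ_eq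
    rw [h1, opA_padd, opA_const ℓ hℓ]
    ring
  have hA2 : ∀ u, opA ℓ (opA ℓ χ) u = opA ℓ (opA ℓ y) u + (s/nR) * (ℓ:ℝ)^2 := by
    intro u
    have h1 : opA ℓ χ = fun v => opA ℓ y v + (fun _ : Vt ℓ => (s/nR) * (ℓ:ℝ)) v :=
      funext hA1
    rw [h1, opA_padd, opA_const ℓ hℓ]
    ring
  have hA3 : ∀ u, opA ℓ (opA ℓ (opA ℓ χ)) u
      = opA ℓ (opA ℓ (opA ℓ y)) u + (s/nR) * (ℓ:ℝ)^3 := by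
    intro u
    have h1 : opA ℓ (opA ℓ χ) = fun v => opA ℓ (opA ℓ y) v
        + (fun _ : Vt ℓ => (s/nR) * (ℓ:ℝ)^2) v := funext hA2
    rw [h1, opA_padd, opA_const ℓ hℓ]
    ring
  have hQ : ∀ u, qOp ℓ q₂ q₁ q₀ χ u = qOp ℓ q₂ q₁ q₀ y u + (s/nR) * qval q₂ q₁ q₀ (ℓ:ℝ) := by
    intro u
    show opA ℓ (opA ℓ (opA ℓ χ)) u + q₂ * opA ℓ (opA ℓ χ) u + q₁ * opA ℓ χ u + q₀ * χ u = _
    rw [hA3 u, hA2 u, hA1 u, hχ_eq u]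
    show _ = opA ℓ (opA ℓ (opA ℓ y)) u + q₂ * opA ℓ (opA ℓ y) u + q₁ * opA ℓ y u + q₀ * y u
      + (s/nR) * qval q₂ q₁ q₀ (ℓ:ℝ)
    rw [qval]
    ring
  -- sum of qOp y vanishes
  have hsA1 : (∑ u : Vt ℓ, opA ℓ y u) = 0 := by rw [sum_opA ℓ hℓ, hsumy, mul_zero]
  have hsA2 : (∑ u : Vt ℓ, opA ℓ (opA ℓ y) u) = 0 := by rw [sum_opA ℓ hℓ, hsA1, mul_zero]
  have hsA3 : (∑ u : Vt ℓ, opA ℓ (opA ℓ (opA ℓ y)) u) = 0 := by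
    rw [sum_opA ℓ hℓ, hsA2, mul_zero]
  have hsQ : (∑ u : Vt ℓ, qOp ℓ q₂ q₁ q₀ y u) = 0 := by
    show (∑ u : Vt ℓ, (opA ℓ (opA ℓ (opA ℓ y)) u + q₂ * opA ℓ (opA ℓ y) u
      + q₁ * opA ℓ y u + q₀ * y u)) = 0
    rw [Finset.sum_add_distrib, Finset.sum_add_distrib, Finset.sum_add_distrib,
      ← Finset.mul_sum, ← Finset.mul_sum, ← Finset.mul_sum, hsA1, hsA2, hsA3, hsumy]
    ring
  -- expand the quadratic form
  have hexpand : ip ℓ χ (qOp ℓ q₂ q₁ q₀ χ)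
      = ip ℓ y (qOp ℓ q₂ q₁ q₀ y) + s^2 / nR * qval q₂ q₁ q₀ (ℓ:ℝ) := by
    show (∑ u : Vt ℓ, χ u * qOp ℓ q₂ q₁ q₀ χ u) = _
    have hterm : ∀ u : Vt ℓ, χ u * qOp ℓ q₂ q₁ q₀ χ u
        = y u * qOp ℓ q₂ q₁ q₀ y u
          + (s/nR) * qval q₂ q₁ q₀ (ℓ:ℝ) * y u
          + (s/nR) * qOp ℓ q₂ q₁ q₀ y u
          + (s/nR)^2 * qval q₂ q₁ q₀ (ℓ:ℝ) := by
      intro u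
      rw [hχ_eq u, hQ u]
      ring
    rw [Finset.sum_congr rfl (fun u _ => hterm u)]
    rw [Finset.sum_add_distrib, Finset.sum_add_distrib, Finset.sum_add_distrib,
      ← Finset.mul_sum, ← Finset.mul_sum, hsumy, hsQ, Finset.sum_const, Finset.card_univ,
      nsmul_eq_mul, ← hnR]
    show ip ℓ y (qOp ℓ q₂ q₁ q₀ y) + (s/nR) * qval q₂ q₁ q₀ (ℓ:ℝ) * 0 + (s/nR) * 0
        + nR * ((s/nR)^2 * qval q₂ q₁ q₀ (ℓ:ℝ)) = _
    field_simp
    ring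
  have hcount := ip_count ℓ hℓ q₂ q₁ q₀ S hp
  have hpos := qform_nonneg ℓ hℓ q₂ q₁ q₀ hq y
  rw [← hχ] at hcount
  rw [hexpand] at hcount
  -- hcount : ip y (qOp y) + s^2/nR * qval ℓ = (q₂ℓ + q₀) * s
  have hineq : s^2 / nR * qval q₂ q₁ q₀ (ℓ:ℝ) ≤ (q₂ * (ℓ:ℝ) + q₀) * s := by
    rw [← hs] at hcount
    rw [← hcount]
    linarith
  rcases eq_or_lt_of_le hs0 with hz | hsp
  · rw [← hz, zero_mul]
    exact mul_nonneg (le_of_lt hn0) hW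
  · have h1 : s^2 * qval q₂ q₁ q₀ (ℓ:ℝ) ≤ (q₂ * (ℓ:ℝ) + q₀) * s * nR := by
      have := mul_le_mul_of_nonneg_right hineq (le_of_lt hn0)
      calc s^2 * qval q₂ q₁ q₀ (ℓ:ℝ) = s^2 / nR * qval q₂ q₁ q₀ (ℓ:ℝ) * nR := by
            field_simp
      _ ≤ (q₂ * (ℓ:ℝ) + q₀) * s * nR := this
    nlinarith [h1, hsp]

lemma adj_of_disj (hℓ : 2 < ℓ) {a b : Vt ℓ} (h : Disjoint a.1 b.1) : (oddGraph ℓ).Adj a b := by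
  refine ⟨?_, h⟩
  intro he
  rw [he] at h
  have hb : b.1 = ∅ := by
    have := disjoint_self.1 h
    simpa using this
  have hc := b.2
  rw [hb] at hc
  simp at hc
  omega

lemma dist_le_two (hℓ : 2 < ℓ) {u v : Vt ℓ} (ht : (u.1 ∩ v.1).card = ℓ - 2) :
    (oddGraph ℓ).dist u v ≤ 3 := by
  have hcard : ((u.1 ∪ v.1)ᶜ).card = ℓ - 1 := by
    rw [Finset.card_compl]
    have huni := Finset.card_union_add_card_inter u.1 v.1
    rw [u.2, v.2, ht] at huni
    simp only [Fintype.card_fin]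
    omega
  set w : Vt ℓ := ⟨(u.1 ∪ v.1)ᶜ, hcard⟩ with hw
  have h1 : Disjoint u.1 w.1 := by
    rw [Finset.disjoint_left]
    intro a hau haw
    rw [hw] at haw
    exact (Finset.mem_compl.1 haw) (Finset.mem_union_left _ hau)
  have h2 : Disjoint w.1 v.1 := by
    rw [Finset.disjoint_left]
    intro a haw hav
    rw [hw] at haw
    exact (Finset.mem_compl.1 haw) (Finset.mem_union_right _ hav)
  have hd := SimpleGraph.dist_le (SimpleGraph.Walk.cons (adj_of_disj ℓ hℓ h1)
      (SimpleGraph.Walk.cons (adj_of_disj ℓ hℓ h2) SimpleGraph.Walk.nil))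
  simp only [SimpleGraph.Walk.length_cons, SimpleGraph.Walk.length_nil] at hd
  omega

lemma dist_le_one (hℓ : 2 < ℓ) {u v : Vt ℓ} (ht : (u.1 ∩ v.1).card = 0) :
    (oddGraph ℓ).dist u v ≤ 3 := by
  have hd : Disjoint u.1 v.1 := by
    rw [Finset.disjoint_iff_inter_eq_empty, ← Finset.card_eq_zero]
    exact ht
  have hd2 := SimpleGraph.dist_le (SimpleGraph.Walk.cons (adj_of_disj ℓ hℓ hd) SimpleGraph.Walk.nil)
  simp only [SimpleGraph.Walk.length_cons, SimpleGraph.Walk.length_nil] at hd2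
  omega

lemma dist_le_three (hℓ : 2 < ℓ) {u v : Vt ℓ} (ht : (u.1 ∩ v.1).card = 1) :
    (oddGraph ℓ).dist u v ≤ 3 := by
  obtain ⟨x, hx⟩ := Finset.card_eq_one.1 ht
  have hxu : x ∈ u.1 := by
    have : x ∈ u.1 ∩ v.1 := by rw [hx]; exact Finset.mem_singleton_self x
    exact (Finset.mem_inter.1 this).1
  have hxv : x ∈ v.1 := by
    have : x ∈ u.1 ∩ v.1 := by rw [hx]; exact Finset.mem_singleton_self x
    exact (Finset.mem_inter.1 this).2
  -- pick y ∈ uᶜ \ v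
  have hynon : (u.1ᶜ \ v.1).Nonempty := by
    rw [Finset.nonempty_iff_ne_empty]
    intro hempty
    have hsub : u.1ᶜ ⊆ v.1 := by
      rw [← Finset.sdiff_eq_empty_iff_subset]
      exact hempty
    have hle := Finset.card_le_card hsub
    rw [compl_card hℓ u, v.2] at hle
    omega
  obtain ⟨y, hy⟩ := hynon
  have hyu : y ∉ u.1 := by
    have := (Finset.mem_sdiff.1 hy).1
    exact Finset.mem_compl.1 this
  have hyv : y ∉ v.1 := (Finset.mem_sdiff.1 hy).2
  have hxy : x ≠ y := fun h => hyv (h ▸ hxv)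
  -- w := (v \ {x}) ∪ {y}
  have hwcard : ((v.1 \ {x}) ∪ {y}).card = ℓ - 1 := by
    have hdisj : Disjoint (v.1 \ {x}) ({y} : Finset (Om ℓ)) := by
      rw [Finset.disjoint_left]
      intro a ha hay
      rw [Finset.mem_singleton] at hay
      exact hyv (hay ▸ (Finset.mem_sdiff.1 ha).1)
    rw [Finset.card_union_of_disjoint hdisj, Finset.card_sdiff_of_subset (by
      intro a ha
      rw [Finset.mem_singleton] at ha
      exact ha ▸ hxv), v.2]
    simp
    omega
  set w : Vt ℓ := ⟨(v.1 \ {x}) ∪ {y}, hwcard⟩ with hwdef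
  have huw : Disjoint u.1 w.1 := by
    rw [Finset.disjoint_left]
    intro a hau haw
    rw [hwdef] at haw
    simp only [Finset.mem_union, Finset.mem_sdiff, Finset.mem_singleton] at haw
    rcases haw with ⟨hav, hax⟩ | hay
    · have : a ∈ u.1 ∩ v.1 := Finset.mem_inter.2 ⟨hau, hav⟩
      rw [hx, Finset.mem_singleton] at this
      exact hax this
    · exact hyu (hay ▸ hau)
  -- z := wᶜ \ {x}
  have hxw : x ∉ w.1 := by
    rw [hwdef]
    intro hmem
    rcases Finset.mem_union.1 hmem with h' | h'
    · exact (Finset.mem_sdiff.1 h').2 (Finset.mem_singleton_self x)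
    · exact hxy (Finset.mem_singleton.1 h')
  have hzcard : (w.1ᶜ \ {x}).card = ℓ - 1 := by
    rw [Finset.card_sdiff_of_subset (by
      intro a ha
      rw [Finset.mem_singleton] at ha
      subst ha
      exact Finset.mem_compl.2 hxw), compl_card hℓ w]
    simp
  set z : Vt ℓ := ⟨w.1ᶜ \ {x}, hzcard⟩ with hzdef
  have hwz : Disjoint w.1 z.1 := by
    rw [Finset.disjoint_left]
    intro a haw haz
    rw [hzdef] at haz
    have := (Finset.mem_sdiff.1 haz).1
    exact (Finset.mem_compl.1 this) haw
  have hzv : Disjoint z.1 v.1 := by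
    rw [Finset.disjoint_left]
    intro a haz hav
    rw [hzdef] at haz
    rw [Finset.mem_sdiff, Finset.mem_compl, Finset.mem_singleton] at haz
    apply haz.1
    rw [hwdef]
    simp only [Finset.mem_union, Finset.mem_sdiff, Finset.mem_singleton]
    left
    exact ⟨hav, haz.2⟩
  have hd := SimpleGraph.dist_le (SimpleGraph.Walk.cons (adj_of_disj ℓ hℓ huw)
      (SimpleGraph.Walk.cons (adj_of_disj ℓ hℓ hwz)
        (SimpleGraph.Walk.cons (adj_of_disj ℓ hℓ hzv) SimpleGraph.Walk.nil)))
  simp only [SimpleGraph.Walk.length_cons, SimpleGraph.Walk.length_nil] at hd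
  omega

/-- pairs of a 3-independent set have middle intersection sizes. -/
lemma pair_bounds (hℓ : 2 < ℓ) (S : Finset (Vt ℓ))
    (hS : (oddGraph ℓ).IsKIndepSet 3 S) :
    ∀ u ∈ S, ∀ v ∈ S, u ≠ v → 2 ≤ (u.1 ∩ v.1).card ∧ (u.1 ∩ v.1).card + 3 ≤ ℓ := by
  intro u hu v hv hne
  have hdist := hS u hu v hv hne
  have hd3 : ¬ ((oddGraph ℓ).dist u v ≤ 3) := by omega
  have htle : (u.1 ∩ v.1).card ≤ ℓ - 1 := by
    calc (u.1 ∩ v.1).card ≤ u.1.card := Finset.card_le_card Finset.inter_subset_left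
    _ = ℓ - 1 := u.2
  have htne : (u.1 ∩ v.1).card ≠ ℓ - 1 := by
    intro h
    apply hne
    have h1 : u.1 ∩ v.1 = u.1 := by
      apply Finset.eq_of_subset_of_card_le Finset.inter_subset_left
      rw [h, u.2]
    have h2 : u.1 ⊆ v.1 := by
      rw [← h1]
      exact Finset.inter_subset_right
    exact Subtype.ext (Finset.eq_of_subset_of_card_le h2 (by rw [u.2, v.2]))
  have ht0 : (u.1 ∩ v.1).card ≠ 0 := fun h => hd3 (dist_le_one ℓ hℓ h)
  have ht1 : (u.1 ∩ v.1).card ≠ 1 := fun h => hd3 (dist_le_three ℓ hℓ h)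
  have ht2 : (u.1 ∩ v.1).card ≠ ℓ - 2 := fun h => hd3 (dist_le_two ℓ hℓ h)
  omega

lemma hq_odd (hℓ : 2 < ℓ) (hodd : Odd ℓ) :
    ∀ i, i ≤ ℓ - 1 → 0 ≤ qval (ℓ:ℝ) ((ℓ:ℝ)-3) (-2*((ℓ:ℝ)-1)) (lam ℓ i) := by
  intro i hi
  have hfact : ∀ x : ℝ, qval (ℓ:ℝ) ((ℓ:ℝ)-3) (-2*((ℓ:ℝ)-1)) x
      = (x + ((ℓ:ℝ)-1)) * ((x+2) * (x-1)) := by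
    intro x
    rw [qval]
    ring
  rw [hfact]
  have hiR : (i:ℝ) ≤ (ℓ:ℝ) - 1 := by
    have : (i:ℝ) ≤ ((ℓ - 1 : ℕ) : ℝ) := by exact_mod_cast hi
    rw [Nat.cast_sub (by omega : 1 ≤ ℓ)] at this
    simpa using this
  rcases Nat.even_or_odd i with hpar | hpar
  · have hx : lam ℓ i = (ℓ:ℝ) - i := by
      rw [lam, Even.neg_one_pow hpar, one_mul]
    rw [hx]
    have h1 : (1:ℝ) ≤ (ℓ:ℝ) - i := by linarith
    apply mul_nonneg
    · have : (0:ℝ) ≤ (ℓ:ℝ) - 1 := by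
        have : (3:ℝ) ≤ (ℓ:ℝ) := by exact_mod_cast hℓ
        linarith
      linarith
    · apply mul_nonneg <;> linarith
  · have hx : lam ℓ i = -((ℓ:ℝ) - i) := by
      rw [lam, Odd.neg_one_pow hpar]
      ring
    rw [hx]
    -- i odd, ℓ odd ⟹ i ≤ ℓ - 2
    have hine : i ≠ ℓ - 1 := by
      intro h
      have heven : Even (ℓ - 1) := Nat.Odd.sub_odd hodd (by norm_num)
      rw [← h] at heven
      exact (Nat.not_even_iff_odd.2 hpar) heven
    have hi2 : i + 2 ≤ ℓ := by omega
    have hX : (2:ℝ) ≤ (ℓ:ℝ) - i := by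
      have : ((i:ℝ) + 2) ≤ (ℓ:ℝ) := by exact_mod_cast hi2
      linarith
    have hi1 : (1:ℝ) ≤ (i:ℝ) := by
      have : 1 ≤ i := hpar.pos
      exact_mod_cast this
    apply mul_nonneg
    · linarith
    · nlinarith

lemma hq_even (hℓ : 2 < ℓ) (heven : Even ℓ) :
    ∀ i, i ≤ ℓ - 1 → 0 ≤ qval ((ℓ:ℝ)-2) (-((ℓ:ℝ)+1)) (-2*((ℓ:ℝ)-1)) (lam ℓ i) := by
  intro i hi
  have hfact : ∀ x : ℝ, qval ((ℓ:ℝ)-2) (-((ℓ:ℝ)+1)) (-2*((ℓ:ℝ)-1)) x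
      = (x + ((ℓ:ℝ)-1)) * ((x+1) * (x-2)) := by
    intro x
    rw [qval]
    ring
  rw [hfact]
  have hiR : (i:ℝ) ≤ (ℓ:ℝ) - 1 := by
    have : (i:ℝ) ≤ ((ℓ - 1 : ℕ) : ℝ) := by exact_mod_cast hi
    rw [Nat.cast_sub (by omega : 1 ≤ ℓ)] at this
    simpa using this
  have h3R : (3:ℝ) ≤ (ℓ:ℝ) := by exact_mod_cast hℓ
  rcases Nat.even_or_odd i with hpar | hpar
  · have hx : lam ℓ i = (ℓ:ℝ) - i := by
      rw [lam, Even.neg_one_pow hpar, one_mul]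
    rw [hx]
    -- i even, ℓ even ⟹ ℓ - i even, and i ≤ ℓ-1 so i ≤ ℓ-2, so ℓ - i ≥ 2
    have hine : i ≠ ℓ - 1 := by
      intro h
      have hodd1 : Odd (ℓ - 1) := Nat.Even.sub_odd (by omega) heven (by norm_num)
      rw [← h] at hodd1
      exact (Nat.not_odd_iff_even.2 hpar) hodd1
    have hi2 : i + 2 ≤ ℓ := by omega
    have hX : (2:ℝ) ≤ (ℓ:ℝ) - i := by
      have : ((i:ℝ) + 2) ≤ (ℓ:ℝ) := by exact_mod_cast hi2
      linarith
    apply mul_nonneg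
    · linarith
    · apply mul_nonneg <;> linarith
  · have hx : lam ℓ i = -((ℓ:ℝ) - i) := by
      rw [lam, Odd.neg_one_pow hpar]
      ring
    rw [hx]
    have hX : (1:ℝ) ≤ (ℓ:ℝ) - i := by linarith
    have hi1 : (1:ℝ) ≤ (i:ℝ) := by
      have : 1 ≤ i := hpar.pos
      exact_mod_cast this
    apply mul_nonneg
    · linarith
    · nlinarith

lemma choose_identity (hℓ : 2 < ℓ) :
    (2*ℓ).choose ℓ = 2 * ((2*ℓ-1).choose (ℓ-1)) := by
  have h1 : (2*ℓ-1) + 1 = 2*ℓ := by omega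
  have h2 : (ℓ-1) + 1 = ℓ := by omega
  have h3 := Nat.choose_succ_succ (2*ℓ-1) (ℓ-1)
  rw [Nat.succ_eq_add_one, Nat.succ_eq_add_one] at h3
  rw [h1, h2] at h3
  have h4 : (2*ℓ-1).choose ℓ = (2*ℓ-1).choose (ℓ-1) := by
    have h5 : (2*ℓ-1) - (ℓ-1) = ℓ := by omega
    calc (2*ℓ-1).choose ℓ = (2*ℓ-1).choose ((2*ℓ-1) - (ℓ-1)) := by rw [h5]
    _ = (2*ℓ-1).choose (ℓ-1) := Nat.choose_symm (by omega)
  rw [h3, h4]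
  omega

lemma card_vt (hℓ : 2 < ℓ) : Fintype.card (Vt ℓ) = (2*ℓ-1).choose (ℓ-1) := by
  rw [Fintype.card_finset_len, Fintype.card_fin]

end OddProof

/-- **Bounds on the 3-independence number of the Odd graph `O_ℓ`, `ℓ > 2`.**
If `ℓ` is odd then `α₃(O_ℓ) ≤ C(2ℓ,ℓ) * (ℓ² - 2ℓ + 2) / (2(ℓ+2)(ℓ-1)(2ℓ-1))`;
if `ℓ` is even then `α₃(O_ℓ) ≤ C(2ℓ,ℓ) * (ℓ² - 4ℓ + 2) / (2(ℓ+1)(ℓ-2)(2ℓ-1))`. -/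
theorem oddGraph_alpha3_bound (ℓ : ℕ) (hℓ : 2 < ℓ) :
    (Odd ℓ → ((oddGraph ℓ).kIndepNum 3 : ℝ) ≤
      (Nat.choose (2 * ℓ) ℓ : ℝ) * ((ℓ : ℝ) ^ 2 - 2 * ℓ + 2) /
        (2 * ((ℓ : ℝ) + 2) * ((ℓ : ℝ) - 1) * (2 * (ℓ : ℝ) - 1))) ∧
    (Even ℓ → ((oddGraph ℓ).kIndepNum 3 : ℝ) ≤
      (Nat.choose (2 * ℓ) ℓ : ℝ) * ((ℓ : ℝ) ^ 2 - 4 * ℓ + 2) /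
        (2 * ((ℓ : ℝ) + 1) * ((ℓ : ℝ) - 2) * (2 * (ℓ : ℝ) - 1))) := by
  classical
  have hPne : ({m : ℕ | ∃ S : Finset (OddProof.Vt ℓ),
      (oddGraph ℓ).IsKIndepSet 3 S ∧ S.card = m}).Nonempty := by
    refine ⟨0, ∅, ?_, rfl⟩
    intro u hu
    exact absurd hu (Finset.notMem_empty u)
  have hbdd : BddAbove {m : ℕ | ∃ S : Finset (OddProof.Vt ℓ),
      (oddGraph ℓ).IsKIndepSet 3 S ∧ S.card = m} := by
    refine ⟨Fintype.card (OddProof.Vt ℓ), ?_⟩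
    rintro m ⟨S, -, rfl⟩
    calc S.card ≤ Finset.univ.card := Finset.card_le_univ S
    _ = Fintype.card (OddProof.Vt ℓ) := Finset.card_univ
  obtain ⟨S, hSind, hScard⟩ := Nat.sSup_mem hPne hbdd
  have hk : (oddGraph ℓ).kIndepNum 3 = S.card := by
    rw [SimpleGraph.kIndepNum, hScard]
  have hpair := OddProof.pair_bounds ℓ hℓ S hSind
  have hnval : (Fintype.card (OddProof.Vt ℓ) : ℝ) = ((2*ℓ-1).choose (ℓ-1) : ℝ) := by
    rw [OddProof.card_vt ℓ hℓ]
  have hCcast : ((2 * ℓ).choose ℓ : ℝ) = 2 * ((2*ℓ-1).choose (ℓ-1) : ℝ) := by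
    rw [OddProof.choose_identity ℓ hℓ]
    push_cast
    ring
  have h3R : (3:ℝ) ≤ (ℓ:ℝ) := by exact_mod_cast hℓ
  constructor
  · -- odd case
    intro hodd
    have hb := OddProof.main_bound ℓ hℓ (ℓ:ℝ) ((ℓ:ℝ)-3) (-2*((ℓ:ℝ)-1))
      (OddProof.hq_odd ℓ hℓ hodd) S hpair
    have hQeq : OddProof.qval (ℓ:ℝ) ((ℓ:ℝ)-3) (-2*((ℓ:ℝ)-1)) (ℓ:ℝ)
        = (2*(ℓ:ℝ)-1) * (((ℓ:ℝ)+2) * ((ℓ:ℝ)-1)) := by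
      rw [OddProof.qval]
      ring
    have hQpos : 0 < OddProof.qval (ℓ:ℝ) ((ℓ:ℝ)-3) (-2*((ℓ:ℝ)-1)) (ℓ:ℝ) := by
      rw [hQeq]
      apply mul_pos (by linarith) (mul_pos (by linarith) (by linarith))
    rw [hk]
    rw [hQeq] at hb
    have hle : (S.card : ℝ) ≤ (Fintype.card (OddProof.Vt ℓ) : ℝ)
        * ((ℓ:ℝ) * (ℓ:ℝ) + (-2*((ℓ:ℝ)-1))) / ((2*(ℓ:ℝ)-1) * (((ℓ:ℝ)+2) * ((ℓ:ℝ)-1))) := by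
      rw [le_div_iff₀ (by rw [← hQeq]; exact hQpos)]
      exact hb
    refine hle.trans (le_of_eq ?_)
    rw [hnval, hCcast]
    have hne1 : ((ℓ:ℝ)+2) ≠ 0 := by linarith
    have hne2 : ((ℓ:ℝ)-1) ≠ 0 := by linarith
    have hne3 : (2*(ℓ:ℝ)-1) ≠ 0 := by linarith
    field_simp
    ring
  · -- even case
    intro heven
    have hb := OddProof.main_bound ℓ hℓ ((ℓ:ℝ)-2) (-((ℓ:ℝ)+1)) (-2*((ℓ:ℝ)-1))
      (OddProof.hq_even ℓ hℓ heven) S hpair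
    have hQeq : OddProof.qval ((ℓ:ℝ)-2) (-((ℓ:ℝ)+1)) (-2*((ℓ:ℝ)-1)) (ℓ:ℝ)
        = (2*(ℓ:ℝ)-1) * (((ℓ:ℝ)+1) * ((ℓ:ℝ)-2)) := by
      rw [OddProof.qval]
      ring
    have hQpos : 0 < OddProof.qval ((ℓ:ℝ)-2) (-((ℓ:ℝ)+1)) (-2*((ℓ:ℝ)-1)) (ℓ:ℝ) := by
      rw [hQeq]
      apply mul_pos (by linarith) (mul_pos (by linarith) (by linarith))
    rw [hk]
    rw [hQeq] at hb
    have hle : (S.card : ℝ) ≤ (Fintype.card (OddProof.Vt ℓ) : ℝ)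
        * (((ℓ:ℝ)-2) * (ℓ:ℝ) + (-2*((ℓ:ℝ)-1))) / ((2*(ℓ:ℝ)-1) * (((ℓ:ℝ)+1) * ((ℓ:ℝ)-2))) := by
      rw [le_div_iff₀ (by rw [← hQeq]; exact hQpos)]
      exact hb
    refine hle.trans (le_of_eq ?_)
    rw [hnval, hCcast]
    have hne1 : ((ℓ:ℝ)+1) ≠ 0 := by linarith
    have hne2 : ((ℓ:ℝ)-2) ≠ 0 := by linarith
    have hne3 : (2*(ℓ:ℝ)-1) ≠ 0 := by linarith
    field_simp
    ring
end
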